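/- arXiv:2407.20196 — 3 statements merged into one kernel-verified Lean document; each statement's English description precedes it below -/
import Mathlib

section
/- Let d ∈ ℕ and T > 0. Let μ : [0,T] × ℝ^d → ℝ^d be continuous with μ(t,·) continuously differentiable for each t and the spatial derivatives jointly continuous in (t,x); let a : [0,T] × ℝ^d → M_d(ℝ) be continuous with a(t,·) twice continuously differentiable for each t and the spatial derivatives jointly continuous in (t,x); let ρ : [0,T] × ℝ^d → ℝ be continuous. Let u, p : [0,T] × ℝ^d → ℝ be C^{1,2} (i.e. ∂_t, ∇_x and ∇²_x exist and are continuous on [0,T] × ℝ^d), and suppose there is a compact set K ⊆ ℝ^d such that p(t,x) = 0 for all t ∈ [0,T] and x ∉ K. If ∂_t u + L u + ρ = 0 on [0,T] × ℝ^d and ∂_t p = L* p on [0,T] × ℝ^d, then the function t ↦ ∫_{ℝ^d} u(t,x) p(t,x) dx is differentiable on [0,T] with derivative −∫_{ℝ^d} ρ(t,x) p(t,x) dx at each t. -/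
open MeasureTheory Set

/-- Partial derivative of `f : ℝ^d → ℝ` in the `i`-th coordinate direction. -/
noncomputable def pderiv1 {d : ℕ} (i : Fin d) (f : (Fin d → ℝ) → ℝ) (x : Fin d → ℝ) : ℝ :=
  fderiv ℝ f x (Pi.single i 1)

/-- The time-dependent generator of a diffusion with drift `μ` and diffusion matrix `a`:
`(L f)(t,x) = ⟨∇_x f(t,x), μ(t,x)⟩ + Tr(∇²_x f(t,x)·a(t,x))`. -/
noncomputable def generatorT {d : ℕ} (μ : ℝ → (Fin d → ℝ) → (Fin d → ℝ))
    (a : ℝ → (Fin d → ℝ) → Fin d → Fin d → ℝ) (f : ℝ → (Fin d → ℝ) → ℝ)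
    (t : ℝ) (x : Fin d → ℝ) : ℝ :=
  fderiv ℝ (f t) x (μ t x) + ∑ i, ∑ j, pderiv1 i (pderiv1 j (f t)) x * a t x j i

/-- The time-dependent formal adjoint (Fokker–Planck operator):
`(L* p)(t,x) = −Σ_i ∂_{x_i}(μ_i(t,·) p(t,·))(x) + Σ_{i,j} ∂_{x_i}∂_{x_j}(a_{ij}(t,·) p(t,·))(x)`. -/
noncomputable def fokkerPlanckT {d : ℕ} (μ : ℝ → (Fin d → ℝ) → (Fin d → ℝ))
    (a : ℝ → (Fin d → ℝ) → Fin d → Fin d → ℝ) (p : ℝ → (Fin d → ℝ) → ℝ)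
    (t : ℝ) (x : Fin d → ℝ) : ℝ :=
  -∑ i, pderiv1 i (fun y => μ t y i * p t y) x
    + ∑ i, ∑ j, pderiv1 i (pderiv1 j fun y => a t y i j * p t y) x

variable {d : ℕ}

lemma pd_zero_off {K : Set (Fin d → ℝ)} (hK : IsClosed K) {f : (Fin d → ℝ) → ℝ}
    (h0 : ∀ x ∉ K, f x = 0) {x : Fin d → ℝ} (hx : x ∉ K) (i : Fin d) :
    pderiv1 i f x = 0 := by
  have hev : f =ᶠ[nhds x] (fun _ => (0:ℝ)) :=
    Filter.eventually_of_mem (hK.isOpen_compl.mem_nhds hx) (fun y hy => h0 y hy)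
  unfold pderiv1
  rw [hev.fderiv_eq, fderiv_fun_const]
  simp

lemma integ_off {K : Set (Fin d → ℝ)} (hK : IsCompact K) {f : (Fin d → ℝ) → ℝ}
    (hf : Continuous f) (h0 : ∀ x ∉ K, f x = 0) : Integrable f := by
  exact hf.integrable_of_hasCompactSupport (HasCompactSupport.intro hK h0)

lemma pd_cont {f : (Fin d → ℝ) → ℝ} (hf : ContDiff ℝ 1 f) (i : Fin d) :
    Continuous (pderiv1 i f) :=
  ((ContinuousLinearMap.apply ℝ ℝ (Pi.single i 1 : Fin d → ℝ)).continuous).comp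
    (hf.continuous_fderiv one_ne_zero)

lemma pd_contDiff {f : (Fin d → ℝ) → ℝ} (hf : ContDiff ℝ 2 f) (i : Fin d) :
    ContDiff ℝ 1 (pderiv1 i f) :=
  ((ContinuousLinearMap.apply ℝ ℝ (Pi.single i 1 : Fin d → ℝ)).contDiff).comp
    (hf.fderiv_right (by norm_num))

lemma pd_mul {f g : (Fin d → ℝ) → ℝ} {x : Fin d → ℝ} (hf : DifferentiableAt ℝ f x)
    (hg : DifferentiableAt ℝ g x) (i : Fin d) :
    pderiv1 i (fun y => f y * g y) x = pderiv1 i f x * g x + f x * pderiv1 i g x := by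
  unfold pderiv1
  rw [fderiv_fun_mul hf hg]
  simp only [ContinuousLinearMap.add_apply, ContinuousLinearMap.smul_apply, smul_eq_mul]
  ring

lemma fderiv_apply_sum {f : (Fin d → ℝ) → ℝ} {x : Fin d → ℝ} (hf : DifferentiableAt ℝ f x)
    (v : Fin d → ℝ) : fderiv ℝ f x v = ∑ i, v i * pderiv1 i f x := by
  have hv : v = ∑ i, v i • (Pi.single i 1 : Fin d → ℝ) := by
    funext j
    simp [Finset.sum_apply, Pi.single_apply]
  conv_lhs => rw [hv]
  rw [map_sum]
  simp [pderiv1]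

lemma ibp {K : Set (Fin d → ℝ)} (hK : IsCompact K) {f g : (Fin d → ℝ) → ℝ}
    (hf : Differentiable ℝ f) (hfc : Continuous f) (hfd : ∀ j, Continuous (pderiv1 j f))
    (hg : Differentiable ℝ g) (hgc : Continuous g) (hgd : ∀ j, Continuous (pderiv1 j g))
    (hg0 : ∀ x ∉ K, g x = 0) (i : Fin d) :
    ∫ x, f x * pderiv1 i g x = -∫ x, pderiv1 i f x * g x := by
  have h1 : Integrable (fun x => fderiv ℝ f x (Pi.single i 1) * g x) :=
    integ_off hK ((hfd i).mul hgc) (fun x hx => by simp [hg0 x hx])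
  have h2 : Integrable (fun x => f x * fderiv ℝ g x (Pi.single i 1)) :=
    integ_off hK (hfc.mul (hgd i)) (fun x hx => by
      have h := pd_zero_off hK.isClosed hg0 hx i
      unfold pderiv1 at h
      simp [h])
  have h3 : Integrable (fun x => f x * g x) :=
    integ_off hK (hfc.mul hgc) (fun x hx => by simp [hg0 x hx])
  exact integral_mul_fderiv_eq_neg_fderiv_mul_of_integrable h1 h2 h3 (fun x _ => hf x) (fun x _ => hg x)

lemma duality_ibp {K : Set (Fin d → ℝ)} (hK : IsCompact K)
    {U P : (Fin d → ℝ) → ℝ} {M : (Fin d → ℝ) → (Fin d → ℝ)}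
    {A : (Fin d → ℝ) → Fin d → Fin d → ℝ}
    (hU : ContDiff ℝ 2 U) (hM : ContDiff ℝ 1 M) (hA : ContDiff ℝ 2 A)
    (hP : ContDiff ℝ 2 P) (hP0 : ∀ x ∉ K, P x = 0) :
    ∫ x, U x * (-∑ i, pderiv1 i (fun y => M y i * P y) x
        + ∑ i, ∑ j, pderiv1 i (pderiv1 j fun y => A y i j * P y) x)
      = ∫ x, (fderiv ℝ U x (M x) + ∑ i, ∑ j, pderiv1 i (pderiv1 j U) x * A x j i) * P x := by
  have hUc : Continuous U := hU.continuous
  have hU1 : ContDiff ℝ 1 U := hU.of_le one_le_two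
  have hUdiff : Differentiable ℝ U := hU1.differentiable one_ne_zero
  have hPc : Continuous P := hP.continuous
  have hP1 : ContDiff ℝ 1 P := hP.of_le one_le_two
  have hMi : ∀ i, ContDiff ℝ 1 (fun x => M x i) := fun i => (contDiff_pi.1 hM) i
  have hAij : ∀ i j, ContDiff ℝ 2 (fun x => A x i j) := fun i j =>
    (contDiff_pi.1 ((contDiff_pi.1 hA) i)) j
  have hgm1 : ∀ i, ContDiff ℝ 1 (fun y => M y i * P y) := fun i => (hMi i).mul hP1
  have hgm0 : ∀ i, ∀ x ∉ K, M x i * P x = 0 := fun i x hx => by rw [hP0 x hx, mul_zero]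
  have hq2 : ∀ i j, ContDiff ℝ 2 (fun y => A y i j * P y) := fun i j => (hAij i j).mul hP
  have hq0 : ∀ i j, ∀ x ∉ K, A x i j * P x = 0 := fun i j x hx => by rw [hP0 x hx, mul_zero]
  -- integrabilities
  have hI1 : ∀ i, Integrable (fun x => U x * pderiv1 i (fun y => M y i * P y) x) :=
    fun i => integ_off hK (hUc.mul (pd_cont (hgm1 i) i))
      (fun x hx => by rw [pd_zero_off hK.isClosed (hgm0 i) hx i, mul_zero])
  have hI2 : ∀ i j, Integrable
      (fun x => U x * pderiv1 i (pderiv1 j fun y => A y i j * P y) x) :=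
    fun i j => integ_off hK (hUc.mul (pd_cont (pd_contDiff (hq2 i j) j) i))
      (fun x hx => by
        rw [pd_zero_off hK.isClosed
          (fun y hy => pd_zero_off hK.isClosed (hq0 i j) hy j) hx i, mul_zero])
  have hI3 : Integrable (fun x => fderiv ℝ U x (M x) * P x) :=
    integ_off hK (((hU.continuous_fderiv two_ne_zero).clm_apply hM.continuous).mul hPc)
      (fun x hx => by rw [hP0 x hx, mul_zero])
  have hI4 : ∀ i j, Integrable (fun x => pderiv1 i (pderiv1 j U) x * A x j i * P x) :=
    fun i j => integ_off hK
      (((pd_cont (pd_contDiff hU j) i).mul (hAij j i).continuous).mul hPc)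
      (fun x hx => by rw [hP0 x hx, mul_zero])
  have hI5 : ∀ i, Integrable (fun x => pderiv1 i U x * (M x i * P x)) :=
    fun i => integ_off hK ((pd_cont hU1 i).mul ((hMi i).continuous.mul hPc))
      (fun x hx => by rw [hP0 x hx, mul_zero, mul_zero])
  have hI6 : ∀ i j, Integrable
      (fun x => pderiv1 j (pderiv1 i U) x * (A x i j * P x)) :=
    fun i j => integ_off hK ((pd_cont (pd_contDiff hU i) j).mul
      ((hAij i j).continuous.mul hPc))
      (fun x hx => by rw [hP0 x hx, mul_zero, mul_zero])
  -- the two integration-by-parts computations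
  have stepA : ∀ i, ∫ x, U x * pderiv1 i (fun y => M y i * P y) x
      = -∫ x, pderiv1 i U x * (M x i * P x) := by
    intro i
    exact ibp hK hUdiff hUc (fun j => pd_cont hU1 j)
      ((hgm1 i).differentiable one_ne_zero) (hgm1 i).continuous
      (fun j => pd_cont (hgm1 i) j) (hgm0 i) i
  have stepB : ∀ i j, ∫ x, U x * pderiv1 i (pderiv1 j fun y => A y i j * P y) x
      = ∫ x, pderiv1 j (pderiv1 i U) x * (A x i j * P x) := by
    intro i j
    have b1 : ∫ x, U x * pderiv1 i (pderiv1 j fun y => A y i j * P y) x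
        = -∫ x, pderiv1 i U x * pderiv1 j (fun y => A y i j * P y) x :=
      ibp hK hUdiff hUc (fun k => pd_cont hU1 k)
        ((pd_contDiff (hq2 i j) j).differentiable one_ne_zero)
        (pd_contDiff (hq2 i j) j).continuous
        (fun k => pd_cont (pd_contDiff (hq2 i j) j) k)
        (fun x hx => pd_zero_off hK.isClosed (hq0 i j) hx j) i
    have b2 : ∫ x, pderiv1 i U x * pderiv1 j (fun y => A y i j * P y) x
        = -∫ x, pderiv1 j (pderiv1 i U) x * (A x i j * P x) :=
      ibp hK ((pd_contDiff hU i).differentiable one_ne_zero) (pd_contDiff hU i).continuous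
        (fun k => pd_cont (pd_contDiff hU i) k)
        ((hq2 i j).differentiable two_ne_zero) (hq2 i j).continuous
        (fun k => pd_cont ((hq2 i j).of_le one_le_two) k) (hq0 i j) j
    rw [b1, b2, neg_neg]
  -- compute LHS
  have lhs_eq : ∫ x, U x * (-∑ i, pderiv1 i (fun y => M y i * P y) x
        + ∑ i, ∑ j, pderiv1 i (pderiv1 j fun y => A y i j * P y) x)
      = (∑ i, ∫ x, pderiv1 i U x * (M x i * P x))
        + ∑ i, ∑ j, ∫ x, pderiv1 j (pderiv1 i U) x * (A x i j * P x) := by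
    have hfun : (fun x => U x * (-∑ i, pderiv1 i (fun y => M y i * P y) x
          + ∑ i, ∑ j, pderiv1 i (pderiv1 j fun y => A y i j * P y) x))
        = fun x => (-∑ i, U x * pderiv1 i (fun y => M y i * P y) x)
          + ∑ i, ∑ j, U x * pderiv1 i (pderiv1 j fun y => A y i j * P y) x := by
      funext x
      simp only [mul_add, mul_neg, Finset.mul_sum]
    have h1 : Integrable (fun x => -∑ i, U x * pderiv1 i (fun y => M y i * P y) x) :=
      (integrable_finset_sum _ fun i _ => hI1 i).neg
    have h2 : Integrable (fun x =>
        ∑ i, ∑ j, U x * pderiv1 i (pderiv1 j fun y => A y i j * P y) x) :=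
      integrable_finset_sum _ fun i _ => integrable_finset_sum _ fun j _ => hI2 i j
    rw [hfun, integral_add h1 h2, integral_neg,
      integral_finset_sum _ fun i _ => hI1 i,
      integral_finset_sum _ fun i _ =>
        integrable_finset_sum _ fun j _ => hI2 i j]
    congr 1
    · rw [← Finset.sum_neg_distrib]
      refine Finset.sum_congr rfl fun i _ => ?_
      rw [stepA i, neg_neg]
    · refine Finset.sum_congr rfl fun i _ => ?_
      rw [integral_finset_sum _ fun j _ => hI2 i j]
      exact Finset.sum_congr rfl fun j _ => stepB i j
  -- compute RHS
  have swap : ∑ i, ∑ j, ∫ x, pderiv1 i (pderiv1 j U) x * A x j i * P x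
      = ∑ i, ∑ j, ∫ x, pderiv1 j (pderiv1 i U) x * (A x i j * P x) := by
    rw [Finset.sum_comm]
    refine Finset.sum_congr rfl fun a _ => Finset.sum_congr rfl fun b _ => ?_
    congr 1
    funext x
    ring
  have rhs_eq : ∫ x, (fderiv ℝ U x (M x)
        + ∑ i, ∑ j, pderiv1 i (pderiv1 j U) x * A x j i) * P x
      = (∑ i, ∫ x, pderiv1 i U x * (M x i * P x))
        + ∑ i, ∑ j, ∫ x, pderiv1 j (pderiv1 i U) x * (A x i j * P x) := by
    have hfun : (fun x => (fderiv ℝ U x (M x)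
          + ∑ i, ∑ j, pderiv1 i (pderiv1 j U) x * A x j i) * P x)
        = fun x => (∑ i, pderiv1 i U x * (M x i * P x))
          + ∑ i, ∑ j, pderiv1 i (pderiv1 j U) x * A x j i * P x := by
      funext x
      rw [fderiv_apply_sum (hUdiff x) (M x), add_mul, Finset.sum_mul, Finset.sum_mul]
      congr 1
      · exact Finset.sum_congr rfl fun i _ => by ring
      · exact Finset.sum_congr rfl fun i _ => by rw [Finset.sum_mul]
    have h3 : Integrable (fun x => ∑ i, pderiv1 i U x * (M x i * P x)) :=
      integrable_finset_sum _ fun i _ => hI5 i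
    have h4 : Integrable (fun x =>
        ∑ i, ∑ j, pderiv1 i (pderiv1 j U) x * A x j i * P x) :=
      integrable_finset_sum _ fun i _ => integrable_finset_sum _ fun j _ => hI4 i j
    rw [hfun, integral_add h3 h4, integral_finset_sum _ fun i _ => hI5 i,
      integral_finset_sum _ fun i _ =>
        integrable_finset_sum _ fun j _ => hI4 i j]
    congr 1
    rw [← swap]
    exact Finset.sum_congr rfl fun i _ => integral_finset_sum _ fun j _ => hI4 i j
  rw [lhs_eq, rhs_eq]

/-- Differential backward–forward duality: if `u` solves the backward (Feynman–Kac) PDE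
`∂_t u + L u + ρ = 0` and `p` solves the Fokker–Planck equation `∂_t p = L* p` on
`[0,T] × ℝ^d`, with `u, p` of class `C^{1,2}`, `p(t,·)` supported in a fixed compact set
for `t ∈ [0,T]`, `μ(t,·)` `C¹` and `a(t,·)` `C²` with all the data continuous in `(t,x)`,
then `t ↦ ∫ u(t,x) p(t,x) dx` is differentiable on `[0,T]` with derivative
`−∫ ρ(t,x) p(t,x) dx` at each `t ∈ [0,T]`. -/
theorem backward_forward_duality_deriv (d : ℕ) (T : ℝ) (hT : 0 < T)
    (μ : ℝ → (Fin d → ℝ) → (Fin d → ℝ))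
    (a : ℝ → (Fin d → ℝ) → Fin d → Fin d → ℝ)
    (ρ : ℝ → (Fin d → ℝ) → ℝ)
    (hμc : Continuous fun q : ℝ × (Fin d → ℝ) => μ q.1 q.2)
    (hμx : ∀ t, ContDiff ℝ 1 (μ t))
    (hμxc : Continuous fun q : ℝ × (Fin d → ℝ) => fderiv ℝ (μ q.1) q.2)
    (hac : Continuous fun q : ℝ × (Fin d → ℝ) => a q.1 q.2)
    (hax : ∀ t, ContDiff ℝ 2 (a t))
    (hax1c : Continuous fun q : ℝ × (Fin d → ℝ) => fderiv ℝ (a q.1) q.2)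
    (hax2c : Continuous fun q : ℝ × (Fin d → ℝ) => fderiv ℝ (fderiv ℝ (a q.1)) q.2)
    (hρc : Continuous fun q : ℝ × (Fin d → ℝ) => ρ q.1 q.2)
    (u p : ℝ → (Fin d → ℝ) → ℝ)
    (huc : Continuous fun q : ℝ × (Fin d → ℝ) => u q.1 q.2)
    (hut : ∀ x, Differentiable ℝ fun t => u t x)
    (hutc : Continuous fun q : ℝ × (Fin d → ℝ) => deriv (fun t => u t q.2) q.1)
    (hux : ∀ t, ContDiff ℝ 2 (u t))
    (hux1c : Continuous fun q : ℝ × (Fin d → ℝ) => fderiv ℝ (u q.1) q.2)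
    (hux2c : Continuous fun q : ℝ × (Fin d → ℝ) => fderiv ℝ (fderiv ℝ (u q.1)) q.2)
    (hpc : Continuous fun q : ℝ × (Fin d → ℝ) => p q.1 q.2)
    (hpt : ∀ x, Differentiable ℝ fun t => p t x)
    (hptc : Continuous fun q : ℝ × (Fin d → ℝ) => deriv (fun t => p t q.2) q.1)
    (hpx : ∀ t, ContDiff ℝ 2 (p t))
    (hpx1c : Continuous fun q : ℝ × (Fin d → ℝ) => fderiv ℝ (p q.1) q.2)
    (hpx2c : Continuous fun q : ℝ × (Fin d → ℝ) => fderiv ℝ (fderiv ℝ (p q.1)) q.2)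
    (hpsupp : ∃ K : Set (Fin d → ℝ), IsCompact K ∧
      ∀ t ∈ Icc (0 : ℝ) T, ∀ x ∉ K, p t x = 0)
    (hu_pde : ∀ t ∈ Icc (0 : ℝ) T, ∀ x,
      deriv (fun s => u s x) t + generatorT μ a u t x + ρ t x = 0)
    (hp_pde : ∀ t ∈ Icc (0 : ℝ) T, ∀ x,
      deriv (fun s => p s x) t = fokkerPlanckT μ a p t x) :
    ∀ t ∈ Icc (0 : ℝ) T,
      HasDerivWithinAt (fun s => ∫ x, u s x * p s x)
        (-∫ x, ρ t x * p t x) (Icc (0 : ℝ) T) t := by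
  intro t ht
  obtain ⟨K, hK, hpK⟩ := hpsupp
  -- continuity in x at fixed time
  have cux : ∀ s, Continuous fun x => u s x := fun s => huc.comp (Continuous.prodMk_right s)
  have cpx : ∀ s, Continuous fun x => p s x := fun s => hpc.comp (Continuous.prodMk_right s)
  have cutx : ∀ s, Continuous fun x => deriv (fun r => u r x) s := fun s =>
    hutc.comp (Continuous.prodMk_right s)
  have cptx : ∀ s, Continuous fun x => deriv (fun r => p r x) s := fun s =>
    hptc.comp (Continuous.prodMk_right s)
  have cρx : ∀ s, Continuous fun x => ρ s x := fun s => hρc.comp (Continuous.prodMk_right s)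
  have cμx : ∀ s, Continuous fun x => μ s x := fun s => hμc.comp (Continuous.prodMk_right s)
  have cax : ∀ s i j, Continuous fun x => a s x i j := fun s i j =>
    (continuous_apply j).comp ((continuous_apply i).comp (hac.comp (Continuous.prodMk_right s)))
  -- time derivative of the product
  have F1 : ∀ s x, HasDerivAt (fun r => u r x * p r x)
      (deriv (fun r => u r x) s * p s x + u s x * deriv (fun r => p r x) s) s := fun s x =>
    ((hut x s).hasDerivAt).mul ((hpt x s).hasDerivAt)
  have hg'c : Continuous fun q : ℝ × (Fin d → ℝ) =>
      deriv (fun r => u r q.2) q.1 * p q.1 q.2 + u q.1 q.2 * deriv (fun r => p r q.2) q.1 :=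
    (hutc.mul hpc).add (huc.mul hptc)
  -- dp/dt vanishes off K on [0,T]
  have hder0 : ∀ s ∈ Icc (0:ℝ) T, ∀ x ∉ K, deriv (fun r => p r x) s = 0 := by
    intro s hs x hx
    rw [hp_pde s hs x]
    unfold fokkerPlanckT
    have h1 : ∀ i : Fin d, pderiv1 i (fun y => μ s y i * p s y) x = 0 := fun i =>
      pd_zero_off hK.isClosed (fun y hy => by rw [hpK s hs y hy, mul_zero]) hx i
    have h2 : ∀ i j : Fin d, pderiv1 i (pderiv1 j fun y => a s y i j * p s y) x = 0 :=
      fun i j => pd_zero_off hK.isClosed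
        (fun y hy => pd_zero_off hK.isClosed
          (fun z hz => by rw [hpK s hs z hz, mul_zero]) hy j) hx i
    simp [h1, h2]
  -- integrability of the product and its time derivative
  have hInt : ∀ s ∈ Icc (0:ℝ) T, Integrable (fun x => u s x * p s x) := fun s hs =>
    integ_off hK ((cux s).mul (cpx s)) (fun x hx => by rw [hpK s hs x hx, mul_zero])
  have hInt' : ∀ s ∈ Icc (0:ℝ) T, Integrable (fun x =>
      deriv (fun r => u r x) s * p s x + u s x * deriv (fun r => p r x) s) := fun s hs =>
    integ_off hK (((cutx s).mul (cpx s)).add ((cux s).mul (cptx s)))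
      (fun x hx => by rw [hpK s hs x hx, hder0 s hs x hx, mul_zero, mul_zero, add_zero])
  -- uniform bound on the time derivative over [0,T] × K
  obtain ⟨C, hC⟩ := (isCompact_Icc.prod hK).exists_bound_of_continuousOn
    (f := fun q : ℝ × (Fin d → ℝ) =>
      deriv (fun r => u r q.2) q.1 * p q.1 q.2 + u q.1 q.2 * deriv (fun r => p r q.2) q.1)
    hg'c.continuousOn
  -- the derivative via dominated convergence
  have main : HasDerivWithinAt (fun s => ∫ x, u s x * p s x)
      (∫ x, deriv (fun r => u r x) t * p t x + u t x * deriv (fun r => p r x) t)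
      (Icc (0:ℝ) T) t := by
    rw [hasDerivWithinAt_iff_tendsto_slope]
    set l := nhdsWithin t (Icc (0:ℝ) T \ {t}) with hl
    have hl_mem : ∀ᶠ s in l, s ∈ Icc (0:ℝ) T \ {t} := eventually_mem_nhdsWithin
    have key : Filter.Tendsto
        (fun s => ∫ x, (s - t)⁻¹ * (u s x * p s x - u t x * p t x)) l
        (nhds (∫ x, deriv (fun r => u r x) t * p t x + u t x * deriv (fun r => p r x) t)) := by
      apply tendsto_integral_filter_of_dominated_convergence
        (bound := K.indicator fun _ => C)
      · exact Filter.Eventually.of_forall fun s =>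
          (continuous_const.mul (((cux s).mul (cpx s)).sub
            ((cux t).mul (cpx t)))).aestronglyMeasurable
      · filter_upwards [hl_mem] with s hs
        apply ae_of_all
        intro x
        by_cases hx : x ∈ K
        · rw [indicator_of_mem hx]
          have hmvt : ‖(u s x * p s x) - (u t x * p t x)‖ ≤ C * ‖s - t‖ := by
            apply Convex.norm_image_sub_le_of_norm_hasDerivWithin_le
              (f := fun r => u r x * p r x)
              (f' := fun r => deriv (fun r => u r x) r * p r x
                + u r x * deriv (fun r => p r x) r)
              (fun r _ => (F1 r x).hasDerivWithinAt)
              (fun r hr => hC (r, x) ⟨hr, hx⟩) (convex_Icc 0 T) ht hs.1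
          have hst : s - t ≠ 0 := sub_ne_zero.2 hs.2
          calc ‖(s - t)⁻¹ * (u s x * p s x - u t x * p t x)‖
              = ‖s - t‖⁻¹ * ‖u s x * p s x - u t x * p t x‖ := by
                rw [norm_mul, norm_inv]
            _ ≤ ‖s - t‖⁻¹ * (C * ‖s - t‖) := by
                apply mul_le_mul_of_nonneg_left hmvt (by positivity)
            _ = C := by
                field_simp
        · rw [indicator_of_notMem hx, hpK s hs.1 x hx, hpK t ht x hx]
          simp
      · exact (integrable_indicator_iff hK.measurableSet).2
          (integrableOn_const hK.measure_lt_top.ne)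
      · apply ae_of_all
        intro x
        have hd := F1 t x
        rw [hasDerivAt_iff_tendsto_slope] at hd
        have hsub : Icc (0:ℝ) T \ {t} ⊆ {t}ᶜ := fun s hs => hs.2
        have := hd.mono_left (nhdsWithin_mono t hsub)
        apply this.congr
        intro s
        rw [slope_def_field]
        rw [div_eq_inv_mul]
    apply key.congr'
    filter_upwards [hl_mem] with s hs
    rw [slope_def_field, ← integral_sub (hInt s hs.1) (hInt t ht), div_eq_inv_mul,
      ← integral_const_mul]
  -- identify the derivative value
  have hIgen : Integrable (fun x => generatorT μ a u t x * p t x) := by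
    apply integ_off hK
    · apply Continuous.mul _ (cpx t)
      apply Continuous.add
      · exact (((hux t).continuous_fderiv two_ne_zero).clm_apply (cμx t))
      · apply continuous_finset_sum
        intro i _
        apply continuous_finset_sum
        intro j _
        exact (pd_cont (pd_contDiff (hux t) j) i).mul (cax t j i)
    · intro x hx
      rw [hpK t ht x hx, mul_zero]
  have hIρ : Integrable (fun x => ρ t x * p t x) :=
    integ_off hK ((cρx t).mul (cpx t)) (fun x hx => by rw [hpK t ht x hx, mul_zero])
  have hμ1 : ∀ i, ContDiff ℝ 1 (fun x => μ t x i) := fun i => (contDiff_pi.1 (hμx t)) i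
  have ha2 : ∀ i j, ContDiff ℝ 2 (fun x => a t x i j) := fun i j =>
    (contDiff_pi.1 ((contDiff_pi.1 (hax t)) i)) j
  have hFP0 : ∀ x ∉ K, fokkerPlanckT μ a p t x = 0 := by
    intro x hx
    unfold fokkerPlanckT
    have h1 : ∀ i : Fin d, pderiv1 i (fun y => μ t y i * p t y) x = 0 := fun i =>
      pd_zero_off hK.isClosed (fun y hy => by rw [hpK t ht y hy, mul_zero]) hx i
    have h2 : ∀ i j : Fin d, pderiv1 i (pderiv1 j fun y => a t y i j * p t y) x = 0 :=
      fun i j => pd_zero_off hK.isClosed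
        (fun y hy => pd_zero_off hK.isClosed
          (fun z hz => by rw [hpK t ht z hz, mul_zero]) hy j) hx i
    simp [h1, h2]
  have hIuFP : Integrable (fun x => u t x * fokkerPlanckT μ a p t x) := by
    apply integ_off hK
    · apply (cux t).mul
      unfold fokkerPlanckT
      apply Continuous.add
      · apply Continuous.neg
        apply continuous_finset_sum
        intro i _
        exact pd_cont ((hμ1 i).mul ((hpx t).of_le one_le_two)) i
      · apply continuous_finset_sum
        intro i _
        apply continuous_finset_sum
        intro j _
        exact pd_cont (pd_contDiff ((ha2 i j).mul (hpx t)) j) i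
    · intro x hx
      rw [hFP0 x hx, mul_zero]
  have hibp : ∫ x, u t x * fokkerPlanckT μ a p t x = ∫ x, generatorT μ a u t x * p t x := by
    have := duality_ibp hK (hux t) (hμx t) (hax t) (hpx t) (hpK t ht)
    simpa [generatorT, fokkerPlanckT] using this
  have hval : (∫ x, deriv (fun r => u r x) t * p t x + u t x * deriv (fun r => p r x) t)
      = -∫ x, ρ t x * p t x := by
    have hfun : (fun x => deriv (fun r => u r x) t * p t x + u t x * deriv (fun r => p r x) t)
        = fun x => -(generatorT μ a u t x * p t x + ρ t x * p t x)
          + u t x * fokkerPlanckT μ a p t x := by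
      funext x
      have h1 := hu_pde t ht x
      have h2 := hp_pde t ht x
      have h3 : deriv (fun s => u s x) t = -generatorT μ a u t x - ρ t x := by linarith
      rw [h3, h2]
      ring
    have hneg : Integrable (fun x => -(generatorT μ a u t x * p t x + ρ t x * p t x)) :=
      (hIgen.add hIρ).neg
    rw [hfun, integral_add hneg hIuFP, integral_neg, integral_add hIgen hIρ, hibp]
    ring
  rw [← hval]
  exact main
end

section
/- Let d ∈ ℕ and T > 0. Let μ : [0,T] × ℝ^d → ℝ^d be continuous with μ(t,·) continuously differentiable for each t and the spatial derivatives jointly continuous in (t,x); let a : [0,T] × ℝ^d → M_d(ℝ) be continuous with a(t,·) twice continuously differentiable for each t and the spatial derivatives jointly continuous in (t,x); let ρ : [0,T] × ℝ^d → ℝ be continuous. Let u, p : [0,T] × ℝ^d → ℝ be C^{1,2}, and suppose there is a compact set K ⊆ ℝ^d such that p(t,x) = 0 for all t ∈ [0,T] and x ∉ K. If ∂_t u + L u + ρ = 0 on [0,T] × ℝ^d and ∂_t p = L* p on [0,T] × ℝ^d, then ∫_{ℝ^d} u(0,x) p(0,x) dx = ∫_0^T ∫_{ℝ^d} ρ(t,x)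 p(t,x) dx dt + ∫_{ℝ^d} u(T,x) p(T,x) dx. -/
open MeasureTheory Set

namespace BFD
variable {d : ℕ}

lemma contDiff_pderiv1 {n : ℕ∞} (i : Fin d) {f : (Fin d → ℝ) → ℝ}
    (hf : ContDiff ℝ (n + 1) f) : ContDiff ℝ n (pderiv1 i f) :=
  (hf.fderiv_right le_rfl).clm_apply contDiff_const

lemma continuous_pderiv1 (i : Fin d) {f : (Fin d → ℝ) → ℝ} (hf : ContDiff ℝ 1 f) :
    Continuous (pderiv1 i f) := by
  have : ContDiff ℝ ((0 : ℕ∞) + 1) f := by norm_num; exact hf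
  exact (contDiff_pderiv1 i this).continuous

lemma hasCompactSupport_pderiv1 (i : Fin d) {f : (Fin d → ℝ) → ℝ}
    (hf : HasCompactSupport f) : HasCompactSupport (pderiv1 i f) :=
  hf.fderiv_apply ℝ (Pi.single i 1)

lemma fderiv_apply_eq_sum {f : (Fin d → ℝ) → ℝ} (x v : Fin d → ℝ) :
    fderiv ℝ f x v = ∑ i, v i * pderiv1 i f x := by
  have hv : v = ∑ i, v i • (Pi.single i 1 : Fin d → ℝ) := by
    ext j
    simp [Pi.single_apply, Finset.sum_apply, Finset.sum_ite_eq']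
  conv_lhs => rw [hv, map_sum]
  simp [pderiv1]

lemma pderiv1_eq_zero_of_zero_outside {K : Set (Fin d → ℝ)} (hKc : IsClosed K)
    {f : (Fin d → ℝ) → ℝ} (h0 : ∀ y ∉ K, f y = 0) (i : Fin d) :
    ∀ x ∉ K, pderiv1 i f x = 0 := by
  intro x hx
  have hsupp : tsupport f ⊆ K :=
    closure_minimal (fun y hy => by_contra fun hyK => hy (h0 y hyK)) hKc
  have : fderiv ℝ f x = 0 := fderiv_of_notMem_tsupport ℝ (fun h => hx (hsupp h))
  simp [pderiv1, this]

lemma ibp (i : Fin d) {f g : (Fin d → ℝ) → ℝ} (hf : ContDiff ℝ 1 f) (hg : ContDiff ℝ 1 g)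
    (hgs : HasCompactSupport g) :
    ∫ x, pderiv1 i f x * g x = - ∫ x, f x * pderiv1 i g x := by
  have h1 : Integrable (fun x => fderiv ℝ f x (Pi.single i 1) * g x) :=
    ((continuous_pderiv1 i hf).mul hg.continuous).integrable_of_hasCompactSupport hgs.mul_left
  have h2 : Integrable (fun x => f x * fderiv ℝ g x (Pi.single i 1)) :=
    (hf.continuous.mul (continuous_pderiv1 i hg)).integrable_of_hasCompactSupport
      (hasCompactSupport_pderiv1 i hgs).mul_left
  have h3 : Integrable (fun x => f x * g x) :=
    (hf.continuous.mul hg.continuous).integrable_of_hasCompactSupport hgs.mul_left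
  have h := integral_mul_fderiv_eq_neg_fderiv_mul_of_integrable h1 h2 h3
    (fun x _ => hf.differentiable one_ne_zero x) (fun x _ => hg.differentiable one_ne_zero x)
  unfold pderiv1
  linarith

lemma duality (m : (Fin d → ℝ) → (Fin d → ℝ)) (A : (Fin d → ℝ) → Fin d → Fin d → ℝ)
    (U P : (Fin d → ℝ) → ℝ) (hm : ContDiff ℝ 1 m) (hA : ContDiff ℝ 2 A)
    (hU : ContDiff ℝ 2 U) (hP : ContDiff ℝ 2 P) (hPs : HasCompactSupport P) :
    ∫ x, (fderiv ℝ U x (m x) + ∑ i, ∑ j, pderiv1 i (pderiv1 j U) x * A x j i) * P x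
      = ∫ x, U x * (-∑ i, pderiv1 i (fun y => m y i * P y) x
          + ∑ i, ∑ j, pderiv1 i (pderiv1 j fun y => A y i j * P y) x) := by
  have hU1 : ContDiff ℝ 1 U := hU.of_le one_le_two
  have hP1 : ContDiff ℝ 1 P := hP.of_le one_le_two
  have hU11 : ContDiff ℝ ((1:ℕ∞) + 1) U := by norm_num; exact hU
  have hmi : ∀ i : Fin d, ContDiff ℝ 1 (fun y => m y i) := fun i =>
    (ContinuousLinearMap.proj i : (Fin d → ℝ) →L[ℝ] ℝ).contDiff.comp hm
  have hAij : ∀ i j : Fin d, ContDiff ℝ 2 (fun y => A y i j) := fun i j =>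
    ((ContinuousLinearMap.proj j : (Fin d → ℝ) →L[ℝ] ℝ).comp
      (ContinuousLinearMap.proj i : (Fin d → Fin d → ℝ) →L[ℝ] (Fin d → ℝ))).contDiff.comp hA
  set g1 : Fin d → (Fin d → ℝ) → ℝ := fun i y => m y i * P y with hg1def
  set g2 : Fin d → Fin d → (Fin d → ℝ) → ℝ := fun i j y => A y i j * P y with hg2def
  have hg1 : ∀ i, ContDiff ℝ 1 (g1 i) := fun i => (hmi i).mul hP1
  have hg2 : ∀ i j, ContDiff ℝ 2 (g2 i j) := fun i j => (hAij i j).mul hP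
  have hg21 : ∀ i j, ContDiff ℝ 1 (g2 i j) := fun i j => (hg2 i j).of_le one_le_two
  have hg2p : ∀ i j k, ContDiff ℝ 1 (pderiv1 k (g2 i j)) := fun i j k => by
    have : ContDiff ℝ ((1:ℕ∞)+1) (g2 i j) := by norm_num; exact hg2 i j
    exact contDiff_pderiv1 k this
  have cs1 : ∀ i, HasCompactSupport (g1 i) := fun i => hPs.mul_left
  have cs2 : ∀ i j, HasCompactSupport (g2 i j) := fun i j => hPs.mul_left
  have step1 : ∀ i, ∫ x, pderiv1 i U x * g1 i x = - ∫ x, U x * pderiv1 i (g1 i) x :=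
    fun i => ibp i hU1 (hg1 i) (cs1 i)
  have step2 : ∀ i j : Fin d, ∫ x, pderiv1 i (pderiv1 j U) x * g2 j i x
      = ∫ x, U x * pderiv1 j (pderiv1 i (g2 j i)) x := by
    intro i j
    have e1 := ibp i (contDiff_pderiv1 j hU11) (hg21 j i) (cs2 j i)
    have e2 := ibp j hU1 (hg2p j i i) (hasCompactSupport_pderiv1 i (cs2 j i))
    rw [e1, e2, neg_neg]
  have int1 : ∀ i : Fin d, Integrable (fun x => pderiv1 i U x * g1 i x) := fun i =>
    ((continuous_pderiv1 i hU1).mul ((hg1 i).continuous)).integrable_of_hasCompactSupport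
      (cs1 i).mul_left
  have int2 : ∀ i j : Fin d, Integrable (fun x => pderiv1 i (pderiv1 j U) x * g2 j i x) :=
    fun i j =>
    ((continuous_pderiv1 i (contDiff_pderiv1 j hU11)).mul
      ((hg21 j i).continuous)).integrable_of_hasCompactSupport (cs2 j i).mul_left
  have int3 : ∀ i : Fin d, Integrable (fun x => U x * pderiv1 i (g1 i) x) := fun i =>
    (hU1.continuous.mul (continuous_pderiv1 i (hg1 i))).integrable_of_hasCompactSupport
      (hasCompactSupport_pderiv1 i (cs1 i)).mul_left
  have int4 : ∀ i j : Fin d, Integrable (fun x => U x * pderiv1 i (pderiv1 j (g2 i j)) x) :=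
    fun i j =>
    (hU1.continuous.mul (continuous_pderiv1 i (hg2p i j j))).integrable_of_hasCompactSupport
      (hasCompactSupport_pderiv1 i (hasCompactSupport_pderiv1 j (cs2 i j))).mul_left
  have lhs_eq : (∫ x, (fderiv ℝ U x (m x) + ∑ i, ∑ j, pderiv1 i (pderiv1 j U) x * A x j i) * P x)
      = (∫ x, (∑ i, pderiv1 i U x * g1 i x) + ∑ i, ∑ j, pderiv1 i (pderiv1 j U) x * g2 j i x) := by
    congr 1; funext x
    rw [fderiv_apply_eq_sum x (m x), add_mul, Finset.sum_mul, Finset.sum_mul]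
    congr 1
    · exact Finset.sum_congr rfl fun i _ => by simp only [hg1def]; ring
    · refine Finset.sum_congr rfl fun i _ => ?_
      rw [Finset.sum_mul]
      exact Finset.sum_congr rfl fun j _ => by simp only [hg2def]; ring
  have rhs_eq : (∫ x, U x * (-∑ i, pderiv1 i (fun y => m y i * P y) x
          + ∑ i, ∑ j, pderiv1 i (pderiv1 j fun y => A y i j * P y) x))
      = (∫ x, (∑ i, -(U x * pderiv1 i (g1 i) x))
          + ∑ i, ∑ j, U x * pderiv1 i (pderiv1 j (g2 i j)) x) := by
    congr 1; funext x
    rw [mul_add, mul_neg, Finset.mul_sum, Finset.mul_sum, ← Finset.sum_neg_distrib]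
    congr 1
    exact Finset.sum_congr rfl fun i _ => by rw [Finset.mul_sum]
  rw [lhs_eq, rhs_eq]
  rw [integral_add (integrable_finset_sum _ fun i _ => int1 i)
    (integrable_finset_sum _ fun i _ => integrable_finset_sum _ fun j _ => int2 i j),
    integral_add (integrable_finset_sum _ fun i _ => (show Integrable (fun x => -(U x * pderiv1 i (g1 i) x)) from (int3 i).neg))
    (integrable_finset_sum _ fun i _ => integrable_finset_sum _ fun j _ => int4 i j),
    integral_finset_sum _ (fun i _ => int1 i),
    integral_finset_sum _ (f := fun i x => -(U x * pderiv1 i (g1 i) x)) (fun i _ => (show Integrable (fun x => -(U x * pderiv1 i (g1 i) x)) from (int3 i).neg)),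
    integral_finset_sum _ (fun i _ => integrable_finset_sum _ fun j _ => int2 i j),
    integral_finset_sum _ (fun i _ => integrable_finset_sum _ fun j _ => int4 i j)]
  congr 1
  · exact Finset.sum_congr rfl fun i _ => by rw [step1 i, integral_neg]
  · calc ∑ i : Fin d, ∫ x, ∑ j, pderiv1 i (pderiv1 j U) x * g2 j i x
        = ∑ i : Fin d, ∑ j : Fin d, ∫ x, pderiv1 i (pderiv1 j U) x * g2 j i x :=
          Finset.sum_congr rfl fun i _ => integral_finset_sum _ fun j _ => int2 i j
      _ = ∑ i : Fin d, ∑ j : Fin d, ∫ x, U x * pderiv1 j (pderiv1 i (g2 j i)) x :=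
          Finset.sum_congr rfl fun i _ => Finset.sum_congr rfl fun j _ => step2 i j
      _ = ∑ j : Fin d, ∑ i : Fin d, ∫ x, U x * pderiv1 j (pderiv1 i (g2 j i)) x :=
          Finset.sum_comm
      _ = ∑ i : Fin d, ∫ x, ∑ j, U x * pderiv1 i (pderiv1 j (g2 i j)) x :=
          Finset.sum_congr rfl fun i _ => (integral_finset_sum _ fun j _ => int4 i j).symm

end BFD

/-- Integrated backward–forward duality: if `u` solves the backward (Feynman–Kac) PDE
`∂_t u + L u + ρ = 0` and `p` solves the Fokker–Planck equation `∂_t p = L* p` on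
`[0,T] × ℝ^d`, with `u, p` of class `C^{1,2}`, `p(t,·)` supported in a fixed compact set
for `t ∈ [0,T]`, `μ(t,·)` `C¹` and `a(t,·)` `C²` with all the data continuous in `(t,x)`,
then `∫ u(0,x) p(0,x) dx = ∫_0^T ∫ ρ(t,x) p(t,x) dx dt + ∫ u(T,x) p(T,x) dx`. -/
theorem backward_forward_duality_integrated (d : ℕ) (T : ℝ) (hT : 0 < T)
    (μ : ℝ → (Fin d → ℝ) → (Fin d → ℝ))
    (a : ℝ → (Fin d → ℝ) → Fin d → Fin d → ℝ)
    (ρ : ℝ → (Fin d → ℝ) → ℝ)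
    (hμc : Continuous fun q : ℝ × (Fin d → ℝ) => μ q.1 q.2)
    (hμx : ∀ t, ContDiff ℝ 1 (μ t))
    (hμxc : Continuous fun q : ℝ × (Fin d → ℝ) => fderiv ℝ (μ q.1) q.2)
    (hac : Continuous fun q : ℝ × (Fin d → ℝ) => a q.1 q.2)
    (hax : ∀ t, ContDiff ℝ 2 (a t))
    (hax1c : Continuous fun q : ℝ × (Fin d → ℝ) => fderiv ℝ (a q.1) q.2)
    (hax2c : Continuous fun q : ℝ × (Fin d → ℝ) => fderiv ℝ (fderiv ℝ (a q.1)) q.2)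
    (hρc : Continuous fun q : ℝ × (Fin d → ℝ) => ρ q.1 q.2)
    (u p : ℝ → (Fin d → ℝ) → ℝ)
    (huc : Continuous fun q : ℝ × (Fin d → ℝ) => u q.1 q.2)
    (hut : ∀ x, Differentiable ℝ fun t => u t x)
    (hutc : Continuous fun q : ℝ × (Fin d → ℝ) => deriv (fun t => u t q.2) q.1)
    (hux : ∀ t, ContDiff ℝ 2 (u t))
    (hux1c : Continuous fun q : ℝ × (Fin d → ℝ) => fderiv ℝ (u q.1) q.2)
    (hux2c : Continuous fun q : ℝ × (Fin d → ℝ) => fderiv ℝ (fderiv ℝ (u q.1)) q.2)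
    (hpc : Continuous fun q : ℝ × (Fin d → ℝ) => p q.1 q.2)
    (hpt : ∀ x, Differentiable ℝ fun t => p t x)
    (hptc : Continuous fun q : ℝ × (Fin d → ℝ) => deriv (fun t => p t q.2) q.1)
    (hpx : ∀ t, ContDiff ℝ 2 (p t))
    (hpx1c : Continuous fun q : ℝ × (Fin d → ℝ) => fderiv ℝ (p q.1) q.2)
    (hpx2c : Continuous fun q : ℝ × (Fin d → ℝ) => fderiv ℝ (fderiv ℝ (p q.1)) q.2)
    (hpsupp : ∃ K : Set (Fin d → ℝ), IsCompact K ∧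
      ∀ t ∈ Icc (0 : ℝ) T, ∀ x ∉ K, p t x = 0)
    (hu_pde : ∀ t ∈ Icc (0 : ℝ) T, ∀ x,
      deriv (fun s => u s x) t + generatorT μ a u t x + ρ t x = 0)
    (hp_pde : ∀ t ∈ Icc (0 : ℝ) T, ∀ x,
      deriv (fun s => p s x) t = fokkerPlanckT μ a p t x) :
    ∫ x, u 0 x * p 0 x =
      (∫ t in (0 : ℝ)..T, ∫ x, ρ t x * p t x) + ∫ x, u T x * p T x := by
  classical
  obtain ⟨K, hK, hKp⟩ := hpsupp
  -- slice continuity helpers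
  have hus : ∀ t : ℝ, Continuous fun x => u t x := fun t => huc.comp (Continuous.prodMk_right t)
  have hps : ∀ t : ℝ, Continuous fun x => p t x := fun t => hpc.comp (Continuous.prodMk_right t)
  have hρs : ∀ t : ℝ, Continuous fun x => ρ t x := fun t => hρc.comp (Continuous.prodMk_right t)
  have hdus : ∀ t : ℝ, Continuous fun x => deriv (fun s => u s x) t := fun t =>
    hutc.comp (Continuous.prodMk_right t)
  have hdps : ∀ t : ℝ, Continuous fun x => deriv (fun s => p s x) t := fun t =>
    hptc.comp (Continuous.prodMk_right t)
  -- compact support of p t for t in [0,T]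
  have hcsp : ∀ t ∈ Icc (0:ℝ) T, HasCompactSupport (p t) := fun t ht =>
    HasCompactSupport.intro hK (hKp t ht)
  -- bound constants
  obtain ⟨C1, hC1⟩ := ((isCompact_Icc (a := (0:ℝ)) (b := T)).prod hK).exists_bound_of_continuousOn
    ((huc.mul hpc).continuousOn : ContinuousOn (fun q : ℝ × (Fin d → ℝ) => u q.1 q.2 * p q.1 q.2) _)
  obtain ⟨C2, hC2⟩ := ((isCompact_Icc (a := (0:ℝ)) (b := T)).prod hK).exists_bound_of_continuousOn
    (((hutc.mul hpc).add (huc.mul hptc)).continuousOn :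
      ContinuousOn (fun q : ℝ × (Fin d → ℝ) =>
        deriv (fun s => u s q.2) q.1 * p q.1 q.2 + u q.1 q.2 * deriv (fun s => p s q.2) q.1) _)
  obtain ⟨C3, hC3⟩ := ((isCompact_Icc (a := (0:ℝ)) (b := T)).prod hK).exists_bound_of_continuousOn
    ((hρc.mul hpc).continuousOn : ContinuousOn (fun q : ℝ × (Fin d → ℝ) => ρ q.1 q.2 * p q.1 q.2) _)
  have hbint : ∀ C : ℝ, Integrable (K.indicator fun _ => C) := by
    intro C
    rw [integrable_indicator_iff hK.measurableSet]
    exact integrableOn_const hK.measure_lt_top.ne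
  -- dp vanishes outside K in the interior
  have hdp0 : ∀ t ∈ Ioo (0:ℝ) T, ∀ x ∉ K, deriv (fun s => p s x) t = 0 := by
    intro t ht x hx
    have hev : (fun s => p s x) =ᶠ[nhds t] fun _ => (0:ℝ) := by
      filter_upwards [Ioo_mem_nhds ht.1 ht.2] with s hs
      exact hKp s (Ioo_subset_Icc_self hs) x hx
    rw [hev.deriv_eq]
    exact deriv_const t 0
  set F : ℝ → ℝ := fun t => ∫ x, u t x * p t x with hFdef
  set G : ℝ → ℝ := fun t => ∫ x, ρ t x * p t x with hGdef
  -- continuity of F on [0,T]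
  have hFcont : ContinuousOn F (Icc 0 T) := by
    intro t ht
    apply continuousWithinAt_of_dominated (bound := K.indicator fun _ => C1)
    · exact Filter.Eventually.of_forall fun s =>
        (((hus s).mul (hps s))).aestronglyMeasurable
    · filter_upwards [self_mem_nhdsWithin] with s hs
      refine Filter.Eventually.of_forall fun x => ?_
      by_cases hx : x ∈ K
      · rw [indicator_of_mem hx]
        exact hC1 (s, x) (mem_prod.2 ⟨hs, hx⟩)
      · rw [indicator_of_notMem hx, hKp s hs x hx, mul_zero, norm_zero]
    · exact hbint C1
    · exact Filter.Eventually.of_forall fun x =>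
        ((huc.comp (continuous_id.prodMk continuous_const)).mul
          (hpc.comp (continuous_id.prodMk continuous_const))).continuousWithinAt
  -- continuity of G on [0,T]
  have hGcont : ContinuousOn G (Icc 0 T) := by
    intro t ht
    apply continuousWithinAt_of_dominated (bound := K.indicator fun _ => C3)
    · exact Filter.Eventually.of_forall fun s =>
        (((hρs s).mul (hps s))).aestronglyMeasurable
    · filter_upwards [self_mem_nhdsWithin] with s hs
      refine Filter.Eventually.of_forall fun x => ?_
      by_cases hx : x ∈ K
      · rw [indicator_of_mem hx]
        exact hC3 (s, x) (mem_prod.2 ⟨hs, hx⟩)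
      · rw [indicator_of_notMem hx, hKp s hs x hx, mul_zero, norm_zero]
    · exact hbint C3
    · exact Filter.Eventually.of_forall fun x =>
        ((hρc.comp (continuous_id.prodMk continuous_const)).mul
          (hpc.comp (continuous_id.prodMk continuous_const))).continuousWithinAt
  -- derivative of F on (0,T)
  have hFderiv : ∀ t ∈ Ioo (0:ℝ) T, HasDerivAt F (-(G t)) t := by
    intro t ht
    have htIcc : t ∈ Icc (0:ℝ) T := Ioo_subset_Icc_self ht
    set ε : ℝ := min t (T - t) with hεdef
    have hε : 0 < ε := lt_min ht.1 (sub_pos.2 ht.2)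
    have hball : Metric.ball t ε ⊆ Ioo 0 T := by
      intro s hs
      rw [Metric.mem_ball, Real.dist_eq, abs_sub_lt_iff] at hs
      have h1 := min_le_left t (T - t)
      have h2 := min_le_right t (T - t)
      constructor <;> [linarith [hs.2]; linarith [hs.1]]
    have main := (hasDerivAt_integral_of_dominated_loc_of_deriv_le (Metric.ball_mem_nhds t hε)
      (F := fun s x => u s x * p s x)
      (F' := fun s x => deriv (fun r => u r x) s * p s x + u s x * deriv (fun r => p r x) s)
      (bound := K.indicator fun _ => C2)
      (Filter.Eventually.of_forall fun s => ((hus s).mul (hps s)).aestronglyMeasurable)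
      (((hus t).mul (hps t)).integrable_of_hasCompactSupport (hcsp t htIcc).mul_left)
      ((((hdus t).mul (hps t)).add ((hus t).mul (hdps t))).aestronglyMeasurable)
      (Filter.Eventually.of_forall fun x => ?_)
      (hbint C2)
      (Filter.Eventually.of_forall fun x s _ =>
        ((hut x s).hasDerivAt.mul (hpt x s).hasDerivAt))).2
    swap
    · -- the bound
      intro s hs
      have hsIoo := hball hs
      by_cases hx : x ∈ K
      · rw [indicator_of_mem hx]
        exact hC2 (s, x) (mem_prod.2 ⟨Ioo_subset_Icc_self hsIoo, hx⟩)
      · rw [indicator_of_notMem hx]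
        show ‖deriv (fun r => u r x) s * p s x + u s x * deriv (fun r => p r x) s‖ ≤ 0
        rw [hKp s (Ioo_subset_Icc_self hsIoo) x hx,
          hdp0 s hsIoo x hx, mul_zero, mul_zero, add_zero, norm_zero]
    -- now rewrite the derivative value
    have key : (∫ x, (deriv (fun r => u r x) t * p t x + u t x * deriv (fun r => p r x) t))
        = -(G t) := by
      have hrw : (fun x => deriv (fun r => u r x) t * p t x + u t x * deriv (fun r => p r x) t)
          = fun x => (-(generatorT μ a u t x * p t x) - ρ t x * p t x)
              + u t x * fokkerPlanckT μ a p t x := by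
        funext x
        have h1 := hu_pde t htIcc x
        have h2 := hp_pde t htIcc x
        rw [h2]
        have h3 : deriv (fun s => u s x) t = -(generatorT μ a u t x) - ρ t x := by linarith
        rw [h3]; ring
      -- continuity of generatorT in x
      have hu11 : ContDiff ℝ ((1:ℕ∞) + 1) (u t) := by norm_num; exact hux t
      have hLu : Continuous (fun x => generatorT μ a u t x) := by
        unfold generatorT
        refine Continuous.add ?_ ?_
        · have : (fun x => fderiv ℝ (u t) x (μ t x))
              = fun x => ∑ i, μ t x i * pderiv1 i (u t) x :=
            funext fun x => BFD.fderiv_apply_eq_sum x (μ t x)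
          rw [this]
          exact continuous_finset_sum _ fun i _ =>
            ((continuous_apply i).comp (hμc.comp (Continuous.prodMk_right t))).mul
              (BFD.continuous_pderiv1 i ((hux t).of_le one_le_two))
        · exact continuous_finset_sum _ fun i _ => continuous_finset_sum _ fun j _ =>
            (BFD.continuous_pderiv1 i (BFD.contDiff_pderiv1 j hu11)).mul
              ((continuous_apply i).comp ((continuous_apply j).comp
                (hac.comp (Continuous.prodMk_right t))))
      -- continuity of fokkerPlanckT in x
      have hg1C : ∀ i : Fin d, ContDiff ℝ 1 (fun y => μ t y i * p t y) := fun i =>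
        ((ContinuousLinearMap.proj i : (Fin d → ℝ) →L[ℝ] ℝ).contDiff.comp (hμx t)).mul
          ((hpx t).of_le one_le_two)
      have hg2C : ∀ i j : Fin d, ContDiff ℝ ((1:ℕ∞)+1) (fun y => a t y i j * p t y) := by
        intro i j
        have : ContDiff ℝ 2 (fun y => a t y i j * p t y) :=
          (((ContinuousLinearMap.proj j : (Fin d → ℝ) →L[ℝ] ℝ).comp
            (ContinuousLinearMap.proj i : (Fin d → Fin d → ℝ) →L[ℝ] (Fin d → ℝ))).contDiff.comp
              (hax t)).mul (hpx t)
        norm_num; exact this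
      have hLSp : Continuous (fun x => fokkerPlanckT μ a p t x) := by
        unfold fokkerPlanckT
        refine Continuous.add ?_ ?_
        · exact (continuous_finset_sum _ fun i _ =>
            BFD.continuous_pderiv1 i (hg1C i)).neg
        · exact continuous_finset_sum _ fun i _ => continuous_finset_sum _ fun j _ =>
            BFD.continuous_pderiv1 i (BFD.contDiff_pderiv1 j (hg2C i j))
      -- fokkerPlanckT vanishes outside K
      have hp0 : ∀ y ∉ K, p t y = 0 := hKp t htIcc
      have hLSp0 : ∀ x ∉ K, fokkerPlanckT μ a p t x = 0 := by
        intro x hx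
        unfold fokkerPlanckT
        rw [Finset.sum_eq_zero, Finset.sum_eq_zero, neg_zero, add_zero]
        · intro i _
          refine Finset.sum_eq_zero fun j _ => ?_
          refine BFD.pderiv1_eq_zero_of_zero_outside hK.isClosed ?_ i x hx
          intro y hy
          exact BFD.pderiv1_eq_zero_of_zero_outside hK.isClosed
            (fun z hz => by rw [hp0 z hz, mul_zero]) j y hy
        · intro i _
          exact BFD.pderiv1_eq_zero_of_zero_outside hK.isClosed
            (fun z hz => by rw [hp0 z hz, mul_zero]) i x hx
      -- integrability of the three pieces
      have I1 : Integrable (fun x => generatorT μ a u t x * p t x) :=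
        (hLu.mul (hps t)).integrable_of_hasCompactSupport (hcsp t htIcc).mul_left
      have I2 : Integrable (fun x => ρ t x * p t x) :=
        ((hρs t).mul (hps t)).integrable_of_hasCompactSupport (hcsp t htIcc).mul_left
      have I3 : Integrable (fun x => u t x * fokkerPlanckT μ a p t x) :=
        ((hus t).mul hLSp).integrable_of_hasCompactSupport
          (HasCompactSupport.intro hK fun x hx => by rw [Pi.mul_apply, hLSp0 x hx, mul_zero])
      have hdual := BFD.duality (μ t) (a t) (u t) (p t) (hμx t) (hax t) (hux t) (hpx t)
        (hcsp t htIcc)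
      have hdual' : ∫ x, generatorT μ a u t x * p t x
          = ∫ x, u t x * fokkerPlanckT μ a p t x := hdual
      have e1 : (∫ x, (-(generatorT μ a u t x * p t x) - ρ t x * p t x
              + u t x * fokkerPlanckT μ a p t x))
          = (∫ x, (-(generatorT μ a u t x * p t x) - ρ t x * p t x))
            + ∫ x, u t x * fokkerPlanckT μ a p t x :=
        integral_add (I1.neg.sub I2) I3
      have e2 : (∫ x, (-(generatorT μ a u t x * p t x) - ρ t x * p t x))
          = (∫ x, -(generatorT μ a u t x * p t x)) - ∫ x, ρ t x * p t x :=
        integral_sub I1.neg I2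
      have e3 : (∫ x, -(generatorT μ a u t x * p t x))
          = -∫ x, generatorT μ a u t x * p t x :=
        integral_neg _
      rw [hrw, e1, e2, e3, hdual']
      simp only [hGdef]
      ring
    rw [key] at main
    exact main
  -- fundamental theorem of calculus
  have hGint : IntervalIntegrable (fun t => -(G t)) volume 0 T :=
    (hGcont.neg).intervalIntegrable_of_Icc hT.le
  have hftc := intervalIntegral.integral_eq_sub_of_hasDeriv_right_of_le hT.le hFcont
    (fun t ht => (hFderiv t ht).hasDerivWithinAt) hGint
  rw [intervalIntegral.integral_neg] at hftc
  have hFT : F T = ∫ x, u T x * p T x := rfl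
  have hF0 : F 0 = ∫ x, u 0 x * p 0 x := rfl
  have hGg : (∫ t in (0:ℝ)..T, G t) = ∫ t in (0:ℝ)..T, ∫ x, ρ t x * p t x := rfl
  linarith [hftc]
end

section
/- Let d, m ∈ ℕ, T > 0, Θ ⊆ ℝ open, θ₀ ∈ Θ, and ζ_1, …, ζ_m ∈ ℤ^d. Let λ : Θ × {1,…,m} × ℤ^d → ℝ be such that θ ↦ λ_{θ,k}(x) is differentiable for every k, x, with λ_{θ,k} and ∂_θ λ_{θ,k} bounded on ℤ^d uniformly for θ in a neighborhood of θ₀ and ∂_θ λ_{θ,k}(x) continuous in θ. Let v : Θ × [0,T] × ℤ^d → ℝ be such that for each x the map (θ,t) ↦ v_θ(t,x) is continuously differentiable with continuous mixed partial ∂_t ∂_θ v_θ(t,x), and such that v_θ, ∂_t v_θ, ∂_θ v_θ and ∂_t ∂_θ v_θ are bounded on [0,T] × ℤ^d uniformly for θ in a neighborhood of θ₀, with ∂_θ v_θ(t,x) continuous in θ. Suppose that for every θ ∈ Θ: ∂_t v_θ(t,x) + Σ_{k=1}^m λ_{θ,k}(x)(v_θ(t,x+ζ_k) − v_θ(t,x))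 = 0 on [0,T] × ℤ^d and v_θ(T,·) = g, where g : ℤ^d → ℝ is bounded and independent of θ. Let p : [0,T] × ℤ^d → ℝ be such that for each x the map t ↦ p(t,x) is continuously differentiable, Σ_{x} sup_{t ∈ [0,T]} |p(t,x)| < ∞, Σ_{x} sup_{t ∈ [0,T]} |∂_t p(t,x)| < ∞, and ∂_t p(t,x) = Σ_{k=1}^m (λ_{θ₀,k}(x−ζ_k) p(t,x−ζ_k) − λ_{θ₀,k}(x) p(t,x)) for all (t,x). Then θ ↦ Σ_{x ∈ ℤ^d} v_θ(0,x) p(0,x) is differentiable at θ₀ with derivative Σ_{k=1}^m ∫_0^T Σ_{x ∈ ℤ^d} (v_{θ₀}(t,x+ζ_k) − v_{θ₀}(t,x)) ∂_θ λ_{θ₀,k}(x) p(t,x) dt. -/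
open Set

/-- Deterministic backward–forward duality form of the eIPA sensitivity formula
(Gupta–Rathinam–Khammash): if, for every `θ` in an open set `Θ ∋ θ₀`, `v_θ` solves the
backward Kolmogorov equation `∂_t v_θ + Σ_k λ_{θ,k}(x)(v_θ(t,x+ζ_k) − v_θ(t,x)) = 0`
on `[0,T] × ℤ^d` with θ-independent terminal condition `v_θ(T,·) = g`, with suitable
regularity and uniform boundedness of `λ`, `v` and their derivatives near `θ₀`, and `p`
solves the forward (master) equation for `θ₀` with summable uniform bounds, then
`θ ↦ Σ_x v_θ(0,x) p(0,x)` is differentiable at `θ₀` with derivative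
`Σ_k ∫_0^T Σ_x (v_{θ₀}(t,x+ζ_k) − v_{θ₀}(t,x)) ∂_θ λ_{θ₀,k}(x) p(t,x) dt`. -/
theorem eipa_sensitivity_duality (d m : ℕ) (T : ℝ) (hT : 0 < T)
    (Θ : Set ℝ) (hΘ : IsOpen Θ) (θ₀ : ℝ) (hθ₀ : θ₀ ∈ Θ)
    (ζ : Fin m → Fin d → ℤ)
    (l : ℝ → Fin m → (Fin d → ℤ) → ℝ)
    (hld : ∀ θ k x, DifferentiableAt ℝ (fun θ' => l θ' k x) θ)
    (hlb : ∃ U ∈ nhds θ₀, ∃ C, ∀ θ ∈ U, ∀ k x,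
      |l θ k x| ≤ C ∧ |deriv (fun θ' => l θ' k x) θ| ≤ C)
    (hlc : ∀ k x, Continuous fun θ => deriv (fun θ' => l θ' k x) θ)
    (g : (Fin d → ℤ) → ℝ) (hg : ∃ C, ∀ x, |g x| ≤ C)
    (v : ℝ → ℝ → (Fin d → ℤ) → ℝ)
    (hv1 : ∀ x, ContDiff ℝ 1 fun q : ℝ × ℝ => v q.1 q.2 x)
    (hvmix : ∀ x θ t, DifferentiableAt ℝ (fun t' => deriv (fun θ' => v θ' t' x) θ) t)
    (hvmixc : ∀ x, Continuous fun q : ℝ × ℝ =>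
      deriv (fun t' => deriv (fun θ' => v θ' t' x) q.1) q.2)
    (hvb : ∃ U ∈ nhds θ₀, ∃ C, ∀ θ ∈ U, ∀ t ∈ Icc (0 : ℝ) T, ∀ x,
      |v θ t x| ≤ C ∧ |deriv (fun t' => v θ t' x) t| ≤ C
        ∧ |deriv (fun θ' => v θ' t x) θ| ≤ C
        ∧ |deriv (fun t' => deriv (fun θ' => v θ' t' x) θ) t| ≤ C)
    (hvθc : ∀ t x, Continuous fun θ => deriv (fun θ' => v θ' t x) θ)
    (hPDE : ∀ θ ∈ Θ, ∀ t ∈ Icc (0 : ℝ) T, ∀ x,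
      deriv (fun t' => v θ t' x) t + ∑ k, l θ k x * (v θ t (x + ζ k) - v θ t x) = 0)
    (hterm : ∀ θ ∈ Θ, ∀ x, v θ T x = g x)
    (p : ℝ → (Fin d → ℤ) → ℝ)
    (hp1 : ∀ x, ContDiff ℝ 1 fun t => p t x)
    (hps : Summable fun x : Fin d → ℤ => ⨆ t : Icc (0 : ℝ) T, |p (↑t) x|)
    (hpts : Summable fun x : Fin d → ℤ => ⨆ t : Icc (0 : ℝ) T, |deriv (fun s => p s x) ↑t|)
    (hp_pde : ∀ t ∈ Icc (0 : ℝ) T, ∀ x,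
      deriv (fun s => p s x) t =
        ∑ k, (l θ₀ k (x - ζ k) * p t (x - ζ k) - l θ₀ k x * p t x)) :
    HasDerivAt (fun θ => ∑' x : Fin d → ℤ, v θ 0 x * p 0 x)
      (∑ k, ∫ t in (0 : ℝ)..T, ∑' x : Fin d → ℤ,
        (v θ₀ t (x + ζ k) - v θ₀ t x) * deriv (fun θ' => l θ' k x) θ₀ * p t x) θ₀ := by
  classical
  obtain ⟨Ul, hUl, Cl, hCl⟩ := hlb
  obtain ⟨Uv, hUv, Cv, hCv⟩ := hvb
  have h0mem : (0:ℝ) ∈ Icc (0:ℝ) T := ⟨le_rfl, hT.le⟩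
  have hTmem : T ∈ Icc (0:ℝ) T := ⟨hT.le, le_rfl⟩
  set C : ℝ := max Cl Cv with hCdef
  have hC0 : 0 ≤ C := le_trans (abs_nonneg _)
    (le_trans (hCv θ₀ (mem_of_mem_nhds hUv) 0 h0mem 0).1 (le_max_right _ _))
  obtain ⟨ε, εpos, hεsub⟩ := Metric.mem_nhds_iff.1
    (Filter.inter_mem (Filter.inter_mem (hΘ.mem_nhds hθ₀) hUl) hUv)
  have hθ₀S : θ₀ ∈ Metric.ball θ₀ ε := Metric.mem_ball_self εpos
  have hSΘ : ∀ θ ∈ Metric.ball θ₀ ε, θ ∈ Θ := fun θ hθ => ((hεsub hθ).1).1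
  have hSl : ∀ θ ∈ Metric.ball θ₀ ε, ∀ (k : Fin m) (x : Fin d → ℤ),
      |l θ k x| ≤ C ∧ |deriv (fun θ' => l θ' k x) θ| ≤ C := by
    intro θ hθ k x
    exact ⟨((hCl θ (hεsub hθ).1.2 k x).1).trans (le_max_left _ _),
      ((hCl θ (hεsub hθ).1.2 k x).2).trans (le_max_left _ _)⟩
  have hSv : ∀ θ ∈ Metric.ball θ₀ ε, ∀ t ∈ Icc (0:ℝ) T, ∀ x : Fin d → ℤ,
      |v θ t x| ≤ C ∧ |deriv (fun t' => v θ t' x) t| ≤ C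
        ∧ |deriv (fun θ' => v θ' t x) θ| ≤ C := by
    intro θ hθ t ht x
    obtain ⟨h1, h2, h3, _⟩ := hCv θ (hεsub hθ).2 t ht x
    exact ⟨h1.trans (le_max_right _ _), h2.trans (le_max_right _ _),
      h3.trans (le_max_right _ _)⟩
  -- sup bounds for p
  have hcp : ∀ x : Fin d → ℤ, Continuous fun t => p t x := fun x => (hp1 x).continuous
  have hPle : ∀ (x : Fin d → ℤ), ∀ t ∈ Icc (0:ℝ) T,
      |p t x| ≤ ⨆ s : Icc (0:ℝ) T, |p (↑s) x| := by
    intro x t ht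
    have hb : BddAbove (range fun s : Icc (0:ℝ) T => |p (↑s) x|) := by
      obtain ⟨M, hM⟩ := (isCompact_Icc.image_of_continuousOn
        ((hcp x).abs.continuousOn (s := Icc (0:ℝ) T))).bddAbove
      exact ⟨M, by
        rintro y ⟨s, rfl⟩
        exact hM (Set.mem_image_of_mem (fun t => |p t x|) s.2)⟩
    exact le_ciSup hb ⟨t, ht⟩
  have hQle : ∀ (x : Fin d → ℤ), ∀ t ∈ Icc (0:ℝ) T,
      |deriv (fun s => p s x) t| ≤ ⨆ s : Icc (0:ℝ) T, |deriv (fun s' => p s' x) (↑s)| := by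
    intro x t ht
    have hb : BddAbove (range fun s : Icc (0:ℝ) T => |deriv (fun s' => p s' x) (↑s)|) := by
      obtain ⟨M, hM⟩ := (isCompact_Icc.image_of_continuousOn
        (((hp1 x).continuous_deriv le_rfl).abs.continuousOn (s := Icc (0:ℝ) T))).bddAbove
      exact ⟨M, by
        rintro y ⟨s, rfl⟩
        exact hM (Set.mem_image_of_mem (fun t => |deriv (fun s' => p s' x) t|) s.2)⟩
    exact le_ciSup hb ⟨t, ht⟩
  have hP0 : ∀ x : Fin d → ℤ, 0 ≤ ⨆ s : Icc (0:ℝ) T, |p (↑s) x| :=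
    fun x => (abs_nonneg _).trans (hPle x 0 h0mem)
  -- summability helper
  have hsum : ∀ (u f : (Fin d → ℤ) → ℝ), Summable u → (∀ x, |f x| ≤ u x) → Summable f :=
    fun u f hu h => summable_abs_iff.1
      (Summable.of_nonneg_of_le (fun _ => abs_nonneg _) h hu)
  have hPz : ∀ z : Fin d → ℤ,
      Summable fun x => ⨆ s : Icc (0:ℝ) T, |p (↑s) (x - z)| := by
    intro z
    exact ((Equiv.subRight z).summable_iff
      (f := fun x => ⨆ s : Icc (0:ℝ) T, |p (↑s) x|)).2 hps
  -- elementary derivative facts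
  have hdvt : ∀ θ t (x : Fin d → ℤ),
      HasDerivAt (fun t' => v θ t' x) (deriv (fun t' => v θ t' x) t) t := by
    intro θ t x
    apply DifferentiableAt.hasDerivAt
    exact DifferentiableAt.comp t (((hv1 x).differentiable one_ne_zero) (θ, t))
      (DifferentiableAt.prodMk (differentiableAt_const θ) differentiableAt_id)
  have hdvθ : ∀ θ t (x : Fin d → ℤ),
      HasDerivAt (fun θ' => v θ' t x) (deriv (fun θ' => v θ' t x) θ) θ := by
    intro θ t x
    apply DifferentiableAt.hasDerivAt
    exact DifferentiableAt.comp θ (((hv1 x).differentiable one_ne_zero) (θ, t))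
      (DifferentiableAt.prodMk (𝕜 := ℝ) (x := θ) (f₁ := fun θ' : ℝ => θ') differentiableAt_id (differentiableAt_const t))
  have hdp : ∀ t (x : Fin d → ℤ),
      HasDerivAt (fun s => p s x) (deriv (fun s => p s x) t) t :=
    fun t x => (((hp1 x).differentiable one_ne_zero) t).hasDerivAt
  have hdl : ∀ θ k (x : Fin d → ℤ),
      HasDerivAt (fun θ' => l θ' k x) (deriv (fun θ' => l θ' k x) θ) θ :=
    fun θ k x => (hld θ k x).hasDerivAt
  have hcvt : ∀ θ (x : Fin d → ℤ), Continuous fun t => v θ t x := fun θ x =>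
    (hv1 x).continuous.comp (continuous_const.prodMk continuous_id)
  have hcdθv : ∀ θ (x : Fin d → ℤ), Continuous fun t => deriv (fun θ' => v θ' t x) θ := by
    intro θ x
    have hEq : ∀ t, deriv (fun θ' => v θ' t x) θ
        = (fderiv ℝ (fun q : ℝ × ℝ => v q.1 q.2 x) (θ, t)) (1, 0) := by
      intro t
      have hF : HasFDerivAt (fun q : ℝ × ℝ => v q.1 q.2 x)
          (fderiv ℝ (fun q : ℝ × ℝ => v q.1 q.2 x) (θ, t)) (θ, t) :=
        (((hv1 x).differentiable one_ne_zero) (θ, t)).hasFDerivAt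
      have hg' : HasDerivAt (fun θ' : ℝ => ((θ', t) : ℝ × ℝ)) ((1 : ℝ), (0 : ℝ)) θ :=
        HasDerivAt.prodMk (hasDerivAt_id θ) (hasDerivAt_const θ t)
      exact (hF.comp_hasDerivAt θ hg').deriv
    have hcont : Continuous fun t =>
        (fderiv ℝ (fun q : ℝ × ℝ => v q.1 q.2 x) (θ, t)) (1, 0) :=
      (((hv1 x).continuous_fderiv one_ne_zero).comp
        (continuous_const.prodMk continuous_id)).clm_apply continuous_const
    exact hcont.congr fun t => (hEq t).symm
  -- simple abs helpers
  have habs2 : ∀ a b : ℝ, |a| ≤ C → |b| ≤ C → |a - b| ≤ 2 * C := by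
    intro a b ha hb
    calc |a - b| ≤ |a| + |b| := abs_sub a b
      _ ≤ 2 * C := by linarith
  have habs : ∀ (f : Fin m → ℝ) (c : ℝ), (∀ k, |f k| ≤ c) → |∑ k, f k| ≤ (m : ℝ) * c := by
    intro f c hf
    calc |∑ k, f k| ≤ ∑ k, |f k| := Finset.abs_sum_le_sum_abs _ _
      _ ≤ ∑ _k : Fin m, c := Finset.sum_le_sum fun k _ => hf k
      _ = (m : ℝ) * c := by simp [Finset.sum_const, Finset.card_univ, nsmul_eq_mul]
  set P : (Fin d → ℤ) → ℝ := fun x => ⨆ s : Icc (0:ℝ) T, |p (↑s) x| with hPdef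
  set Q : (Fin d → ℤ) → ℝ := fun x => ⨆ s : Icc (0:ℝ) T, |deriv (fun s' => p s' x) (↑s)|
    with hQdef
  have hΦtermbd : ∀ θ ∈ Metric.ball θ₀ ε, ∀ t ∈ Icc (0:ℝ) T, ∀ x : Fin d → ℤ,
      |(∑ k, (l θ k x - l θ₀ k x) * (v θ t (x + ζ k) - v θ t x)) * p t x|
        ≤ (m : ℝ) * (4 * C ^ 2) * P x := by
    intro θ hθ t ht x
    rw [abs_mul]
    have h1 : |∑ k, (l θ k x - l θ₀ k x) * (v θ t (x + ζ k) - v θ t x)|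
        ≤ (m:ℝ) * (4 * C ^ 2) := by
      refine habs _ _ fun k => ?_
      rw [abs_mul]
      calc |l θ k x - l θ₀ k x| * |v θ t (x + ζ k) - v θ t x|
          ≤ (2*C) * (2*C) := mul_le_mul (habs2 _ _ (hSl θ hθ k x).1 (hSl θ₀ hθ₀S k x).1)
            (habs2 _ _ (hSv θ hθ t ht (x + ζ k)).1 (hSv θ hθ t ht x).1) (abs_nonneg _)
            (by positivity)
        _ = 4 * C ^ 2 := by ring
    exact mul_le_mul h1 (hPle x t ht) (abs_nonneg _) (by positivity)
  have hΦcont : ∀ θ ∈ Metric.ball θ₀ ε, ContinuousOn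
      (fun t => ∑' x : Fin d → ℤ,
        (∑ k, (l θ k x - l θ₀ k x) * (v θ t (x + ζ k) - v θ t x)) * p t x)
      (Icc (0:ℝ) T) := by
    intro θ hθ
    refine continuousOn_tsum (fun x => ?_) (hps.mul_left ((m : ℝ) * (4 * C ^ 2)))
      (fun x t ht => ?_)
    · exact ((continuous_finset_sum _ fun k _ => continuous_const.mul
        ((hcvt θ (x + ζ k)).sub (hcvt θ x))).mul (hcp x)).continuousOn
    · rw [Real.norm_eq_abs]; exact hΦtermbd θ hθ t ht x
  have keyA : ∀ θ ∈ Metric.ball θ₀ ε,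
      (∑' x : Fin d → ℤ, v θ 0 x * p 0 x)
        = (∑' x : Fin d → ℤ, g x * p T x)
          + ∫ t in (0:ℝ)..T, ∑' x : Fin d → ℤ,
              (∑ k, (l θ k x - l θ₀ k x) * (v θ t (x + ζ k) - v θ t x)) * p t x := by
    intro θ hθ
    have hvb' : ∀ t ∈ Icc (0:ℝ) T, ∀ x : Fin d → ℤ, |v θ t x| ≤ C :=
      fun t ht x => (hSv θ hθ t ht x).1
    have hsummain : ∀ t ∈ Icc (0:ℝ) T, Summable fun x : Fin d → ℤ => v θ t x * p t x := by
      intro t ht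
      refine hsum (fun x => C * P x) _ (hps.mul_left C) fun x => ?_
      rw [abs_mul]
      exact mul_le_mul (hvb' t ht x) (hPle x t ht) (abs_nonneg _) hC0
    have hDident : ∀ t ∈ Icc (0:ℝ) T,
        (∑' x : Fin d → ℤ,
          (deriv (fun t' => v θ t' x) t * p t x + v θ t x * deriv (fun s => p s x) t))
        = -∑' x : Fin d → ℤ,
            (∑ k, (l θ k x - l θ₀ k x) * (v θ t (x + ζ k) - v θ t x)) * p t x := by
      intro t ht
      have hA : ∀ k : Fin m, Summable fun x : Fin d → ℤ =>
          v θ t x * (l θ₀ k (x - ζ k) * p t (x - ζ k)) := by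
        intro k
        refine hsum (fun x => C * (C * P (x - ζ k))) _
          (((hPz (ζ k)).mul_left C).mul_left C) fun x => ?_
        rw [abs_mul, abs_mul]
        exact mul_le_mul (hvb' t ht x)
          (mul_le_mul (hSl θ₀ hθ₀S k (x - ζ k)).1 (hPle (x - ζ k) t ht) (abs_nonneg _) hC0)
          (mul_nonneg (abs_nonneg _) (abs_nonneg _)) hC0
      have hB : ∀ k : Fin m, Summable fun x : Fin d → ℤ => v θ t x * (l θ₀ k x * p t x) := by
        intro k
        refine hsum (fun x => C * (C * P x)) _ ((hps.mul_left C).mul_left C) fun x => ?_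
        rw [abs_mul, abs_mul]
        exact mul_le_mul (hvb' t ht x)
          (mul_le_mul (hSl θ₀ hθ₀S k x).1 (hPle x t ht) (abs_nonneg _) hC0)
          (mul_nonneg (abs_nonneg _) (abs_nonneg _)) hC0
      have hL : ∀ k : Fin m, Summable fun x : Fin d → ℤ =>
          l θ k x * (v θ t (x + ζ k) - v θ t x) * p t x := by
        intro k
        refine hsum (fun x => C * (2 * C) * P x) _ (hps.mul_left (C * (2 * C))) fun x => ?_
        rw [abs_mul, abs_mul]
        exact mul_le_mul (mul_le_mul (hSl θ hθ k x).1
          (habs2 _ _ (hvb' t ht (x + ζ k)) (hvb' t ht x)) (abs_nonneg _) hC0)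
          (hPle x t ht) (abs_nonneg _) (by positivity)
      have hE : ∀ k : Fin m, Summable fun x : Fin d → ℤ =>
          v θ t (x + ζ k) * (l θ₀ k x * p t x) := by
        intro k
        refine hsum (fun x => C * (C * P x)) _ ((hps.mul_left C).mul_left C) fun x => ?_
        rw [abs_mul, abs_mul]
        exact mul_le_mul (hvb' t ht (x + ζ k))
          (mul_le_mul (hSl θ₀ hθ₀S k x).1 (hPle x t ht) (abs_nonneg _) hC0)
          (mul_nonneg (abs_nonneg _) (abs_nonneg _)) hC0
      have hk : ∀ k : Fin m,
          (∑' x : Fin d → ℤ,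
            (v θ t x * (l θ₀ k (x - ζ k) * p t (x - ζ k))
              - (v θ t x * (l θ₀ k x * p t x)
                  + l θ k x * (v θ t (x + ζ k) - v θ t x) * p t x)))
          = ∑' x : Fin d → ℤ,
              (l θ₀ k x - l θ k x) * (v θ t (x + ζ k) - v θ t x) * p t x := by
        intro k
        rw [Summable.tsum_sub (hA k) ((hB k).add (hL k)), Summable.tsum_add (hB k) (hL k)]
        have hshift : (∑' x : Fin d → ℤ, v θ t x * (l θ₀ k (x - ζ k) * p t (x - ζ k)))
            = ∑' x : Fin d → ℤ, v θ t (x + ζ k) * (l θ₀ k x * p t x) := by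
          have h := (Equiv.subRight (ζ k)).tsum_eq
            (f := fun y : Fin d → ℤ => v θ t (y + ζ k) * (l θ₀ k y * p t y))
          simp only [Equiv.subRight_apply, sub_add_cancel] at h
          exact h
        rw [hshift, sub_add_eq_sub_sub, ← Summable.tsum_sub (hE k) (hB k),
          ← Summable.tsum_sub ((hE k).sub (hB k)) (hL k)]
        exact tsum_congr fun x => by ring
      have hterm_eq : ∀ x : Fin d → ℤ,
          deriv (fun t' => v θ t' x) t * p t x + v θ t x * deriv (fun s => p s x) t
          = ∑ k, (v θ t x * (l θ₀ k (x - ζ k) * p t (x - ζ k))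
              - (v θ t x * (l θ₀ k x * p t x)
                  + l θ k x * (v θ t (x + ζ k) - v θ t x) * p t x)) := by
        intro x
        have h1 : deriv (fun t' => v θ t' x) t
            = -∑ k, l θ k x * (v θ t (x + ζ k) - v θ t x) := by
          have h := hPDE θ (hSΘ θ hθ) t ht x
          linarith
        rw [h1, hp_pde t ht x]
        simp only [Finset.mul_sum, Finset.sum_mul, neg_mul, mul_sub, sub_mul,
          Finset.sum_sub_distrib, Finset.sum_add_distrib, sub_add_eq_sub_sub]
        ring
      have hM : ∀ k : Fin m, Summable fun x : Fin d → ℤ =>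
          (l θ k x - l θ₀ k x) * (v θ t (x + ζ k) - v θ t x) * p t x := by
        intro k
        refine hsum (fun x => 2 * C * (2 * C) * P x) _ (hps.mul_left _) fun x => ?_
        rw [abs_mul, abs_mul]
        exact mul_le_mul (mul_le_mul (habs2 _ _ (hSl θ hθ k x).1 (hSl θ₀ hθ₀S k x).1)
          (habs2 _ _ (hvb' t ht (x + ζ k)) (hvb' t ht x)) (abs_nonneg _) (by positivity))
          (hPle x t ht) (abs_nonneg _) (by positivity)
      have hW2 : (∑' x : Fin d → ℤ,
          (∑ k, (l θ k x - l θ₀ k x) * (v θ t (x + ζ k) - v θ t x)) * p t x)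
          = ∑ k, ∑' x : Fin d → ℤ,
              (l θ k x - l θ₀ k x) * (v θ t (x + ζ k) - v θ t x) * p t x := by
        rw [← Summable.tsum_finsetSum fun k _ => hM k]
        exact tsum_congr fun x => by rw [Finset.sum_mul]
      calc (∑' x : Fin d → ℤ,
            (deriv (fun t' => v θ t' x) t * p t x + v θ t x * deriv (fun s => p s x) t))
          = ∑' x : Fin d → ℤ, ∑ k, (v θ t x * (l θ₀ k (x - ζ k) * p t (x - ζ k))
              - (v θ t x * (l θ₀ k x * p t x)
                  + l θ k x * (v θ t (x + ζ k) - v θ t x) * p t x)) :=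
            tsum_congr hterm_eq
        _ = ∑ k, ∑' x : Fin d → ℤ, (v θ t x * (l θ₀ k (x - ζ k) * p t (x - ζ k))
              - (v θ t x * (l θ₀ k x * p t x)
                  + l θ k x * (v θ t (x + ζ k) - v θ t x) * p t x)) :=
            Summable.tsum_finsetSum fun k _ => (hA k).sub ((hB k).add (hL k))
        _ = ∑ k, ∑' x : Fin d → ℤ,
              (l θ₀ k x - l θ k x) * (v θ t (x + ζ k) - v θ t x) * p t x :=
            Finset.sum_congr rfl fun k _ => hk k
        _ = -∑' x : Fin d → ℤ,
              (∑ k, (l θ k x - l θ₀ k x) * (v θ t (x + ζ k) - v θ t x)) * p t x := by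
            rw [hW2, ← Finset.sum_neg_distrib]
            refine Finset.sum_congr rfl fun k _ => ?_
            rw [← tsum_neg]
            exact tsum_congr fun x => by ring
    have hφcont : ContinuousOn (fun s => ∑' x : Fin d → ℤ, v θ s x * p s x) (Icc (0:ℝ) T) := by
      refine continuousOn_tsum (fun x => ((hcvt θ x).mul (hcp x)).continuousOn)
        (hps.mul_left C) (fun x t ht => ?_)
      rw [Real.norm_eq_abs, abs_mul]
      exact mul_le_mul (hvb' t ht x) (hPle x t ht) (abs_nonneg _) hC0
    have hderiv : ∀ t ∈ Ioo (0:ℝ) T,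
        HasDerivAt (fun s => ∑' x : Fin d → ℤ, v θ s x * p s x)
          (-∑' x : Fin d → ℤ,
            (∑ k, (l θ k x - l θ₀ k x) * (v θ t (x + ζ k) - v θ t x)) * p t x) t := by
      intro t ht
      have ht' : t ∈ Icc (0:ℝ) T := ⟨ht.1.le, ht.2.le⟩
      have hbd : ∀ x : Fin d → ℤ, ∀ s, s ∈ Ioo (0:ℝ) T →
          ‖deriv (fun t' => v θ t' x) s * p s x + v θ s x * deriv (fun s' => p s' x) s‖
            ≤ C * P x + C * Q x := by
        intro x s hs
        have hs' : s ∈ Icc (0:ℝ) T := ⟨hs.1.le, hs.2.le⟩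
        rw [Real.norm_eq_abs]
        calc |deriv (fun t' => v θ t' x) s * p s x + v θ s x * deriv (fun s' => p s' x) s|
            ≤ |deriv (fun t' => v θ t' x) s * p s x| + |v θ s x * deriv (fun s' => p s' x) s| :=
              abs_add_le _ _
          _ ≤ C * P x + C * Q x := by
              rw [abs_mul, abs_mul]
              exact add_le_add
                (mul_le_mul (hSv θ hθ s hs' x).2.1 (hPle x s hs') (abs_nonneg _) hC0)
                (mul_le_mul (hvb' s hs' x) (hQle x s hs') (abs_nonneg _) hC0)
      have H := hasDerivAt_tsum_of_isPreconnected
        ((hps.mul_left C).add (hpts.mul_left C)) isOpen_Ioo isPreconnected_Ioo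
        (fun x s _ => (hdvt θ s x).mul (hdp s x)) hbd ht (hsummain t ht') ht
      rw [hDident t ht'] at H
      exact H
    have hint : IntervalIntegrable
        (fun t => -∑' x : Fin d → ℤ,
          (∑ k, (l θ k x - l θ₀ k x) * (v θ t (x + ζ k) - v θ t x)) * p t x)
        MeasureTheory.volume 0 T := by
      apply ContinuousOn.intervalIntegrable
      rw [uIcc_of_le hT.le]
      exact (hΦcont θ hθ).neg
    have hFTC := intervalIntegral.integral_eq_sub_of_hasDeriv_right_of_le hT.le hφcont
      (fun t ht => (hderiv t ht).hasDerivWithinAt) hint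
    rw [intervalIntegral.integral_neg] at hFTC
    have hFTC2 : (-∫ t in (0:ℝ)..T, ∑' x : Fin d → ℤ,
          (∑ k, (l θ k x - l θ₀ k x) * (v θ t (x + ζ k) - v θ t x)) * p t x)
        = (∑' x : Fin d → ℤ, v θ T x * p T x) - ∑' x : Fin d → ℤ, v θ 0 x * p 0 x := hFTC
    have htermeq : (∑' x : Fin d → ℤ, v θ T x * p T x) = ∑' x : Fin d → ℤ, g x * p T x :=
      tsum_congr fun x => by rw [hterm θ (hSΘ θ hθ) x]
    rw [← htermeq]
    linarith [hFTC2]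
  have hF'bnd : ∀ θ ∈ Metric.ball θ₀ ε, ∀ t ∈ Icc (0:ℝ) T, ∀ x : Fin d → ℤ,
      |(∑ k, (deriv (fun θ' => l θ' k x) θ * (v θ t (x + ζ k) - v θ t x)
          + (l θ k x - l θ₀ k x)
            * (deriv (fun θ' => v θ' t (x + ζ k)) θ - deriv (fun θ' => v θ' t x) θ))) * p t x|
        ≤ (m : ℝ) * (6 * C ^ 2) * P x := by
    intro θ hθ t ht x
    rw [abs_mul]
    have h1 : |∑ k, (deriv (fun θ' => l θ' k x) θ * (v θ t (x + ζ k) - v θ t x)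
        + (l θ k x - l θ₀ k x)
          * (deriv (fun θ' => v θ' t (x + ζ k)) θ - deriv (fun θ' => v θ' t x) θ))|
        ≤ (m : ℝ) * (6 * C ^ 2) := by
      refine habs _ _ fun k => ?_
      have e1 : |deriv (fun θ' => l θ' k x) θ * (v θ t (x + ζ k) - v θ t x)| ≤ C * (2 * C) := by
        rw [abs_mul]
        exact mul_le_mul (hSl θ hθ k x).2
          (habs2 _ _ (hSv θ hθ t ht (x + ζ k)).1 (hSv θ hθ t ht x).1) (abs_nonneg _) hC0
      have e2 : |(l θ k x - l θ₀ k x)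
          * (deriv (fun θ' => v θ' t (x + ζ k)) θ - deriv (fun θ' => v θ' t x) θ)|
          ≤ (2 * C) * (2 * C) := by
        rw [abs_mul]
        exact mul_le_mul (habs2 _ _ (hSl θ hθ k x).1 (hSl θ₀ hθ₀S k x).1)
          (habs2 _ _ (hSv θ hθ t ht (x + ζ k)).2.2 (hSv θ hθ t ht x).2.2) (abs_nonneg _)
          (by positivity)
      refine le_trans (abs_add_le _ _) ?_
      refine le_trans (add_le_add e1 e2) (le_of_eq (by ring))
    exact mul_le_mul h1 (hPle x t ht) (abs_nonneg _) (by positivity)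
  have hdΦ : ∀ t ∈ Icc (0:ℝ) T, ∀ θ ∈ Metric.ball θ₀ ε,
      HasDerivAt (fun θ' => ∑' x : Fin d → ℤ,
          (∑ k, (l θ' k x - l θ₀ k x) * (v θ' t (x + ζ k) - v θ' t x)) * p t x)
        (∑' x : Fin d → ℤ,
          (∑ k, (deriv (fun θ' => l θ' k x) θ * (v θ t (x + ζ k) - v θ t x)
            + (l θ k x - l θ₀ k x)
              * (deriv (fun θ' => v θ' t (x + ζ k)) θ - deriv (fun θ' => v θ' t x) θ))) * p t x)
        θ := by
    intro t ht θ hθ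
    refine hasDerivAt_tsum_of_isPreconnected
      (u := fun x : Fin d → ℤ => (m : ℝ) * (6 * C ^ 2) * P x)
      (g := fun (x : Fin d → ℤ) (θ' : ℝ) =>
        (∑ k, (l θ' k x - l θ₀ k x) * (v θ' t (x + ζ k) - v θ' t x)) * p t x)
      (g' := fun (x : Fin d → ℤ) (θ' : ℝ) =>
        (∑ k, (deriv (fun θ'' => l θ'' k x) θ' * (v θ' t (x + ζ k) - v θ' t x)
          + (l θ' k x - l θ₀ k x)
            * (deriv (fun θ'' => v θ'' t (x + ζ k)) θ' - deriv (fun θ'' => v θ'' t x) θ'))) * p t x)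
      (hps.mul_left ((m : ℝ) * (6 * C ^ 2)))
      Metric.isOpen_ball (convex_ball θ₀ ε).isPreconnected
      (fun x θ' hθ' => ?_) (fun x θ' hθ' => ?_) hθ₀S ?_ hθ
    · exact HasDerivAt.mul_const (HasDerivAt.fun_sum fun k _ =>
        ((hdl θ' k x).sub_const _).mul ((hdvθ θ' t (x + ζ k)).sub (hdvθ θ' t x))) _
    · rw [Real.norm_eq_abs]
      exact hF'bnd θ' hθ' t ht x
    · exact summable_zero.congr fun x => by simp
  have hIoc : Set.uIoc (0:ℝ) T = Ioc 0 T := uIoc_of_le hT.le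
  have hsumP : Summable fun x : Fin d → ℤ => (m : ℝ) * (6 * C ^ 2) * P x := hps.mul_left _
  have hBder : HasDerivAt
      (fun θ => ∫ t in (0:ℝ)..T, ∑' x : Fin d → ℤ,
        (∑ k, (l θ k x - l θ₀ k x) * (v θ t (x + ζ k) - v θ t x)) * p t x)
      (∫ t in (0:ℝ)..T, ∑' x : Fin d → ℤ,
        (∑ k, (deriv (fun θ' => l θ' k x) θ₀ * (v θ₀ t (x + ζ k) - v θ₀ t x)
          + (l θ₀ k x - l θ₀ k x)
            * (deriv (fun θ' => v θ' t (x + ζ k)) θ₀ - deriv (fun θ' => v θ' t x) θ₀))) * p t x)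
      θ₀ := by
    refine (intervalIntegral.hasDerivAt_integral_of_dominated_loc_of_deriv_le (Metric.ball_mem_nhds θ₀ εpos)
      (F := fun θ t => ∑' x : Fin d → ℤ,
        (∑ k, (l θ k x - l θ₀ k x) * (v θ t (x + ζ k) - v θ t x)) * p t x)
      (F' := fun θ t => ∑' x : Fin d → ℤ,
        (∑ k, (deriv (fun θ' => l θ' k x) θ * (v θ t (x + ζ k) - v θ t x)
          + (l θ k x - l θ₀ k x)
            * (deriv (fun θ' => v θ' t (x + ζ k)) θ - deriv (fun θ' => v θ' t x) θ))) * p t x)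
      (bound := fun _ => (m : ℝ) * (6 * C ^ 2) * ∑' x : Fin d → ℤ, P x)
      ?_ ?_ ?_ ?_ ?_ ?_).2
    · filter_upwards [Metric.ball_mem_nhds θ₀ εpos] with θ hθ
      rw [hIoc]
      exact ((hΦcont θ hθ).mono Ioc_subset_Icc_self).aestronglyMeasurable measurableSet_Ioc
    · show IntervalIntegrable (fun t => ∑' x : Fin d → ℤ,
        (∑ k, (l θ₀ k x - l θ₀ k x) * (v θ₀ t (x + ζ k) - v θ₀ t x)) * p t x)
          MeasureTheory.volume 0 T
      have h0 : (fun t => ∑' x : Fin d → ℤ,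
          (∑ k, (l θ₀ k x - l θ₀ k x) * (v θ₀ t (x + ζ k) - v θ₀ t x)) * p t x)
          = fun _ => (0:ℝ) := funext fun t => by simp
      rw [h0]
      exact intervalIntegrable_const
    · rw [hIoc]
      refine (ContinuousOn.mono ?_ Ioc_subset_Icc_self).aestronglyMeasurable measurableSet_Ioc
      refine continuousOn_tsum (fun x => ?_) hsumP (fun x t ht => ?_)
      · refine Continuous.continuousOn ?_
        refine (continuous_finset_sum _ fun k _ => ?_).mul (hcp x)
        exact (continuous_const.mul ((hcvt θ₀ (x + ζ k)).sub (hcvt θ₀ x))).add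
          (continuous_const.mul ((hcdθv θ₀ (x + ζ k)).sub (hcdθv θ₀ x)))
      · rw [Real.norm_eq_abs]
        exact hF'bnd θ₀ hθ₀S t ht x
    · refine Filter.Eventually.of_forall fun t => fun ht θ hθ => ?_
      rw [hIoc] at ht
      have ht' : t ∈ Icc (0:ℝ) T := Ioc_subset_Icc_self ht
      have habsf : Summable fun x : Fin d → ℤ =>
          |(∑ k, (deriv (fun θ' => l θ' k x) θ * (v θ t (x + ζ k) - v θ t x)
            + (l θ k x - l θ₀ k x)
              * (deriv (fun θ' => v θ' t (x + ζ k)) θ - deriv (fun θ' => v θ' t x) θ))) * p t x| :=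
        Summable.of_nonneg_of_le (fun _ => abs_nonneg _) (fun x => hF'bnd θ hθ t ht' x) hsumP
      have h1 := norm_tsum_le_tsum_norm (f := fun x : Fin d → ℤ =>
          (∑ k, (deriv (fun θ' => l θ' k x) θ * (v θ t (x + ζ k) - v θ t x)
            + (l θ k x - l θ₀ k x)
              * (deriv (fun θ' => v θ' t (x + ζ k)) θ - deriv (fun θ' => v θ' t x) θ))) * p t x)
        (by simpa only [Real.norm_eq_abs] using habsf)
      simp only [Real.norm_eq_abs] at h1
      refine h1.trans ?_
      refine (Summable.tsum_le_tsum (fun x => hF'bnd θ hθ t ht' x) habsf hsumP).trans ?_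
      exact le_of_eq tsum_mul_left
    · exact intervalIntegrable_const
    · refine Filter.Eventually.of_forall fun t => fun ht θ hθ => ?_
      rw [hIoc] at ht
      exact hdΦ t (Ioc_subset_Icc_self ht) θ hθ
  have hGsum : ∀ k : Fin m, ∀ t ∈ Icc (0:ℝ) T, Summable fun x : Fin d → ℤ =>
      (v θ₀ t (x + ζ k) - v θ₀ t x) * deriv (fun θ' => l θ' k x) θ₀ * p t x := by
    intro k t ht
    refine hsum (fun x => 2 * C * C * P x) _ (hps.mul_left _) fun x => ?_
    rw [abs_mul, abs_mul]
    exact mul_le_mul (mul_le_mul (habs2 _ _ (hSv θ₀ hθ₀S t ht (x + ζ k)).1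
      (hSv θ₀ hθ₀S t ht x).1) (hSl θ₀ hθ₀S k x).2 (abs_nonneg _) (by positivity))
      (hPle x t ht) (abs_nonneg _) (by positivity)
  have hGint : ∀ k : Fin m, IntervalIntegrable
      (fun t => ∑' x : Fin d → ℤ,
        (v θ₀ t (x + ζ k) - v θ₀ t x) * deriv (fun θ' => l θ' k x) θ₀ * p t x)
      MeasureTheory.volume 0 T := by
    intro k
    apply ContinuousOn.intervalIntegrable
    rw [uIcc_of_le hT.le]
    refine continuousOn_tsum (fun x => ?_) (hps.mul_left (2 * C * C)) (fun x t ht => ?_)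
    · exact ((((hcvt θ₀ (x + ζ k)).sub (hcvt θ₀ x)).mul continuous_const).mul
        (hcp x)).continuousOn
    · rw [Real.norm_eq_abs, abs_mul, abs_mul]
      exact mul_le_mul (mul_le_mul (habs2 _ _ (hSv θ₀ hθ₀S t ht (x + ζ k)).1
        (hSv θ₀ hθ₀S t ht x).1) (hSl θ₀ hθ₀S k x).2 (abs_nonneg _) (by positivity))
        (hPle x t ht) (abs_nonneg _) (by positivity)
  have hDeq : (∫ t in (0:ℝ)..T, ∑' x : Fin d → ℤ,
        (∑ k, (deriv (fun θ' => l θ' k x) θ₀ * (v θ₀ t (x + ζ k) - v θ₀ t x)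
          + (l θ₀ k x - l θ₀ k x)
            * (deriv (fun θ' => v θ' t (x + ζ k)) θ₀ - deriv (fun θ' => v θ' t x) θ₀))) * p t x)
      = ∑ k, ∫ t in (0:ℝ)..T, ∑' x : Fin d → ℤ,
          (v θ₀ t (x + ζ k) - v θ₀ t x) * deriv (fun θ' => l θ' k x) θ₀ * p t x := by
    rw [← intervalIntegral.integral_finset_sum (fun k _ => hGint k)]
    refine intervalIntegral.integral_congr fun t ht => ?_
    rw [uIcc_of_le hT.le] at ht
    rw [← Summable.tsum_finsetSum fun k _ => hGsum k t ht]
    refine tsum_congr fun x => ?_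
    rw [Finset.sum_mul]
    exact Finset.sum_congr rfl fun k _ => by ring
  have hev : (fun θ => ∑' x : Fin d → ℤ, v θ 0 x * p 0 x)
      =ᶠ[nhds θ₀] fun θ => (∑' x : Fin d → ℤ, g x * p T x)
          + ∫ t in (0:ℝ)..T, ∑' x : Fin d → ℤ,
              (∑ k, (l θ k x - l θ₀ k x) * (v θ t (x + ζ k) - v θ t x)) * p t x := by
    filter_upwards [Metric.ball_mem_nhds θ₀ εpos] with θ hθ using keyA θ hθ
  have hfinal := (hBder.const_add (∑' x : Fin d → ℤ, g x * p T x)).congr_of_eventuallyEq hev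
  rw [hDeq] at hfinal
  exact hfinal
end
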